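/- arXiv:2302.02321 — 11 statements merged into one kernel-verified Lean document; each statement's English description precedes it below -/
import Mathlib

section
/- For any k ∈ ℕ and any positive real α, there exists a natural number β ∈ ℕ₀[α] such that β cannot be written as a sum of at most k (not necessarily distinct) nonnegative integer powers of α. In particular, the additive monoid ℕ₀[α] is not k-furcus. -/
private lemma listsum_aux (g : ℕ → ℝ) :
    ∀ L : List ℕ, ∑ i ∈ Finset.range L.length, g (L.getD i 0) = (L.map g).sum := by
  intro L
  induction L with
  | nil => simp
  | cons a t ih =>
    rw [List.length_cons, Finset.sum_range_succ']
    simp only [List.getD_cons_succ, List.getD_cons_zero, List.map_cons, List.sum_cons, ih]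
    ring

private lemma growth_aux (k : ℕ) {α : ℝ} (hα : 1 < α) :
    ∃ M : ℕ, (((M + 2 : ℕ) : ℝ)) ^ k + 1 < α ^ M := by
  have hr0 : (0:ℝ) ≤ α⁻¹ := by positivity
  have hr1 : α⁻¹ < 1 := inv_lt_one_of_one_lt₀ hα
  have hε : (0:ℝ) < (2 * 3 ^ k)⁻¹ := by positivity
  have h := (tendsto_pow_const_mul_const_pow_of_lt_one k hr0 hr1).eventually
    (gt_mem_nhds hε)
  have h2 := h.and (Filter.eventually_ge_atTop 1)
  obtain ⟨M, hM1, hM2⟩ := h2.exists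
  refine ⟨M, ?_⟩
  have hαM : (0:ℝ) < α ^ M := by positivity
  have hM1' : (M:ℝ) ^ k * (α ^ M)⁻¹ < (2 * 3 ^ k)⁻¹ := by
    simpa [inv_pow] using hM1
  have hMk : (0:ℝ) < (M:ℝ) ^ k := by
    have : (1:ℝ) ≤ (M:ℝ) := by exact_mod_cast hM2
    positivity
  have key : 2 * 3 ^ k * (M:ℝ) ^ k < α ^ M := by
    rw [mul_inv_lt_iff₀ hαM] at hM1'
    calc 2 * 3 ^ k * (M:ℝ) ^ k = (M:ℝ) ^ k * (2 * 3 ^ k) := by ring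
    _ < (2 * 3 ^ k)⁻¹ * α ^ M * (2 * 3 ^ k) := by
        apply mul_lt_mul_of_pos_right hM1' (by positivity)
    _ = α ^ M := by field_simp
  refine lt_of_le_of_lt ?_ key
  have hMcast : (1:ℝ) ≤ (M:ℝ) := by exact_mod_cast hM2
  have h3 : ((M + 2 : ℕ) : ℝ) ≤ 3 * (M:ℝ) := by push_cast; linarith
  have h4 : ((M + 2 : ℕ) : ℝ) ^ k ≤ (3 * (M:ℝ)) ^ k := by
    apply pow_le_pow_left₀ (by positivity) h3
  have h5 : (1:ℝ) ≤ ((M + 2 : ℕ) : ℝ) ^ k := one_le_pow₀ (by push_cast; linarith)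
  rw [mul_pow] at h4
  nlinarith [h4, h5]

/-- For any `k ∈ ℕ` and positive real `α`, there is a natural number `β ∈ ℕ₀[α]`
that is not a sum of at most `k` nonnegative integer powers of `α`;
in particular `ℕ₀[α]` is not `k`-furcus. -/
theorem stmt_2 (k : ℕ) (α : ℝ) (hα : 0 < α) :
    ∃ β : ℕ, 0 < β ∧
      (β : ℝ) ∈ AddSubmonoid.closure (Set.range fun n : ℕ => α ^ n) ∧
      ¬ ∃ l : Multiset ℕ, l.card ≤ k ∧ (l.map fun n => α ^ n).sum = (β : ℝ) := by
  classical
  have hmem : ∀ β : ℕ, (β : ℝ) ∈ AddSubmonoid.closure (Set.range fun n : ℕ => α ^ n) := by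
    intro β
    have h1 : (1:ℝ) ∈ AddSubmonoid.closure (Set.range fun n : ℕ => α ^ n) :=
      AddSubmonoid.subset_closure ⟨0, pow_zero α⟩
    have := nsmul_mem h1 β
    simpa [nsmul_eq_mul] using this
  rcases le_or_gt α 1 with hle | hgt
  · refine ⟨k + 1, Nat.succ_pos k, hmem _, ?_⟩
    rintro ⟨l, hcard, hsum⟩
    have hb : ∀ x ∈ l.map fun n => α ^ n, x ≤ 1 := by
      rintro x hx
      obtain ⟨n, _, rfl⟩ := Multiset.mem_map.mp hx
      exact pow_le_one₀ hα.le hle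
    have := Multiset.sum_le_card_nsmul _ 1 hb
    rw [hsum, Multiset.card_map] at this
    simp only [nsmul_eq_mul, mul_one] at this
    have h2 : (k + 1 : ℕ) ≤ Multiset.card l := by exact_mod_cast this
    omega
  · obtain ⟨M, hM⟩ := growth_aux k hgt
    set N : ℕ := (M + 2) ^ k + 1 with hN
    have key : ∃ β ∈ Finset.Icc 1 N,
        ¬ ∃ l : Multiset ℕ, l.card ≤ k ∧ (l.map fun n => α ^ n).sum = (β : ℝ) := by
      by_contra hcon
      push_neg at hcon
      set g : ℕ → ℝ := fun v => if v = M + 1 then 0 else α ^ v with hg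
      set D : (Fin k → Fin (M + 2)) → ℝ := fun f => ∑ i, g (f i) with hD
      have claim : ∀ β ∈ Finset.Icc 1 N, ∃ f : Fin k → Fin (M + 2), D f = (β : ℝ) := by
        intro β hβ
        obtain ⟨l, hlc, hls⟩ := hcon β hβ
        obtain ⟨hβ1, hβN⟩ := Finset.mem_Icc.mp hβ
        -- elements of l are < M
        have hel : ∀ n ∈ l, n < M := by
          intro n hn
          have h1 : α ^ n ≤ (l.map fun n => α ^ n).sum := by
            apply Multiset.single_le_sum
            · rintro x hx
              obtain ⟨m, _, rfl⟩ := Multiset.mem_map.mp hx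
              positivity
            · exact Multiset.mem_map_of_mem _ hn
          have h2 : (β : ℝ) ≤ ((M + 2 : ℕ) : ℝ) ^ k + 1 := by
            have : (β : ℝ) ≤ (N : ℝ) := by exact_mod_cast hβN
            rw [hN] at this; push_cast at this ⊢; linarith
          have h3 : α ^ n < α ^ M := by
            rw [hls] at h1
            linarith [hM]
          exact (pow_lt_pow_iff_right₀ hgt).mp h3
        set p : Multiset ℕ := l + Multiset.replicate (k - Multiset.card l) (M + 1) with hp
        have hpc : Multiset.card p = k := by
          rw [hp, Multiset.card_add, Multiset.card_replicate]
          omega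
        set L : List ℕ := p.toList with hLdef
        have hL : L.length = k := by rw [hLdef, Multiset.length_toList, hpc]
        have hpel : ∀ n ∈ p, n ≤ M + 1 := by
          intro n hn
          rw [hp, Multiset.mem_add] at hn
          rcases hn with h | h
          · have := hel n h; omega
          · rw [Multiset.eq_of_mem_replicate h]
        have hLel : ∀ i : ℕ, i < k → L.getD i 0 ≤ M + 1 := by
          intro i hi
          have hi' : i < L.length := by omega
          rw [List.getD_eq_getElem L 0 hi']
          apply hpel
          rw [← Multiset.mem_toList, ← hLdef]
          exact List.getElem_mem hi'
        refine ⟨fun i => ⟨L.getD i 0 % (M + 2), Nat.mod_lt _ (by omega)⟩, ?_⟩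
        have hmod : ∀ i : Fin k, L.getD (i : ℕ) 0 % (M + 2) = L.getD (i : ℕ) 0 := by
          intro i
          exact Nat.mod_eq_of_lt (by have := hLel i i.2; omega)
        calc D (fun i => ⟨L.getD i 0 % (M + 2), Nat.mod_lt _ (by omega)⟩)
            = ∑ i : Fin k, g (L.getD (i : ℕ) 0) := by
              rw [hD]; exact Finset.sum_congr rfl fun i _ => by
                simp only [Fin.val_mk]; rw [hmod i]
          _ = ∑ i ∈ Finset.range k, g (L.getD i 0) :=
              Fin.sum_univ_eq_sum_range (fun i => g (L.getD i 0)) k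
          _ = (L.map g).sum := by rw [← hL]; exact listsum_aux g L
          _ = (p.map g).sum := by
              rw [hLdef]
              conv_rhs => rw [← Multiset.coe_toList p]
              rw [Multiset.map_coe, Multiset.sum_coe]
          _ = (l.map g).sum + ((Multiset.replicate (k - Multiset.card l) (M + 1)).map g).sum := by
              rw [hp, Multiset.map_add, Multiset.sum_add]
          _ = (l.map fun n => α ^ n).sum + 0 := by
              congr 1
              · apply congrArg
                apply Multiset.map_congr rfl
                intro n hn
                have := hel n hn
                rw [hg]
                simp only [if_neg (by omega : ¬ n = M + 1)]
              · rw [Multiset.map_replicate, hg]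
                simp
          _ = (β : ℝ) := by rw [add_zero, hls]
      choose F hF using claim
      have hinj : Set.InjOn (fun β => if h : β ∈ Finset.Icc 1 N then F β h else default)
          (Finset.Icc 1 N : Finset ℕ) := by
        intro a ha b hb hab
        simp only [Finset.mem_coe] at ha hb
        simp only [dif_pos ha, dif_pos hb] at hab
        have : ((a : ℝ)) = (b : ℝ) := by rw [← hF a ha, ← hF b hb, hab]
        exact_mod_cast this
      have hcard := Finset.card_le_card_of_injOn _
        (fun a _ => Finset.mem_univ (α := Fin k → Fin (M + 2)) _) hinj
      rw [Nat.card_Icc] at hcard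
      have huniv : (Finset.univ : Finset (Fin k → Fin (M + 2))).card = (M + 2) ^ k := by
        rw [Finset.card_univ, Fintype.card_fun]
        simp
      rw [huniv] at hcard
      omega
    obtain ⟨β, hβ, hrep⟩ := key
    obtain ⟨hβ1, _⟩ := Finset.mem_Icc.mp hβ
    exact ⟨β, hβ1, hmem β, hrep⟩
end

section
/- Fix an integer k ≥ 3. For i ∈ {1,…,k}, let A_i = {v ∈ ℕ^k : v_j = 1 for all j ≠ i}, and let M be the additive submonoid of ℕ₀^k generated by A = A_1 ∪ ⋯ ∪ A_k. Then M is atomic with set of atoms equal to A, M is k-furcus, but M is not (k−1)-furcus. -/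
/-- `a` is an (additive) atom of the submonoid `S`. -/
def IsAddAtomIn {R : Type*} [AddCommMonoid R] (S : AddSubmonoid R) (a : R) : Prop :=
  a ∈ S ∧ a ≠ 0 ∧ ∀ u v, u ∈ S → v ∈ S → u ≠ 0 → v ≠ 0 → a ≠ u + v

/-- `S` is atomic: every nonzero element is a sum of atoms. -/
def IsAtomicMonoid {R : Type*} [AddCommMonoid R] (S : AddSubmonoid R) : Prop :=
  ∀ x ∈ S, x ≠ 0 → ∃ l : Multiset R, (∀ a ∈ l, IsAddAtomIn S a) ∧ l.sum = x

/-- `S` is `k`-furcus: every nonzero element has a factorization into at most `k` atoms. -/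
def IsFurcus {R : Type*} [AddCommMonoid R] (S : AddSubmonoid R) (k : ℕ) : Prop :=
  ∀ x ∈ S, x ≠ 0 → ∃ l : Multiset R, l.card ≤ k ∧ (∀ a ∈ l, IsAddAtomIn S a) ∧ l.sum = x

/- auxiliary lemmas -/

lemma sum_apply_multiset {k : ℕ} (l : Multiset (Fin k → ℕ)) (j : Fin k) :
    l.sum j = (l.map (fun a => a j)).sum := by
  induction l using Multiset.induction with
  | empty => simp
  | cons a t ih => simp [Multiset.sum_cons, ih]

lemma card_le_sum {k : ℕ} (l : Multiset (Fin k → ℕ)) (j : Fin k)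
    (h : ∀ a ∈ l, 1 ≤ a j) : l.card ≤ l.sum j := by
  induction l using Multiset.induction with
  | empty => simp
  | cons a t ih =>
    simp only [Multiset.sum_cons, Multiset.card_cons, Pi.add_apply]
    have h1 := h a (Multiset.mem_cons_self a t)
    have h2 := ih (fun b hb => h b (Multiset.mem_cons_of_mem hb))
    omega

lemma sum_le_card {k : ℕ} (l : Multiset (Fin k → ℕ)) (j : Fin k)
    (h : ∀ a ∈ l, a j ≤ 1) : l.sum j ≤ l.card := by
  induction l using Multiset.induction with
  | empty => simp
  | cons a t ih =>
    simp only [Multiset.sum_cons, Multiset.card_cons, Pi.add_apply]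
    have h1 := h a (Multiset.mem_cons_self a t)
    have h2 := ih (fun b hb => h b (Multiset.mem_cons_of_mem hb))
    omega

/-- For `k ≥ 3`, the submonoid of `ℕ₀^k` generated by
`A = ⋃ i, {v : all coordinates positive, and v j = 1 for j ≠ i}` is atomic with
set of atoms `A`, is `k`-furcus, but is not `(k-1)`-furcus. -/
theorem stmt_3 (k : ℕ) (hk : 3 ≤ k) (A : Set (Fin k → ℕ))
    (hA : A = ⋃ i : Fin k, {v : Fin k → ℕ | (∀ j, 1 ≤ v j) ∧ ∀ j, j ≠ i → v j = 1}) :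
    IsAtomicMonoid (AddSubmonoid.closure A) ∧
    (∀ a, IsAddAtomIn (AddSubmonoid.closure A) a ↔ a ∈ A) ∧
    IsFurcus (AddSubmonoid.closure A) k ∧
    ¬ IsFurcus (AddSubmonoid.closure A) (k - 1) := by
  have hk0 : 0 < k := by omega
  -- characterization of membership in A
  have hAmem : ∀ a, a ∈ A ↔ ∃ i : Fin k, (∀ j, 1 ≤ a j) ∧ ∀ j, j ≠ i → a j = 1 := by
    intro a; rw [hA]; simp
  -- elements of A have all coords ≥ 1
  have hApos : ∀ a ∈ A, ∀ j, 1 ≤ a j := by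
    intro a ha j
    obtain ⟨i, h1, _⟩ := (hAmem a).1 ha
    exact h1 j
  have hAne : ∀ a ∈ A, a ≠ 0 := by
    intro a ha h0
    have := hApos a ha ⟨0, hk0⟩
    rw [h0] at this; simp at this
  -- nonzero elements of the closure have all coords ≥ 1
  have hclos_pos : ∀ x ∈ AddSubmonoid.closure A, x ≠ 0 → ∀ j, 1 ≤ x j := by
    intro x hx hx0 j
    obtain ⟨l, hl, hsum⟩ := AddSubmonoid.exists_multiset_of_mem_closure hx
    have hlne : l ≠ 0 := by
      rintro rfl; exact hx0 hsum.symm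
    have hcard : 1 ≤ l.card := by
      rcases Multiset.exists_mem_of_ne_zero hlne with ⟨a, ha⟩
      exact Multiset.card_pos_iff_exists_mem.2 ⟨a, ha⟩
    calc 1 ≤ l.card := hcard
    _ ≤ l.sum j := card_le_sum l j (fun a ha => hApos a (hl a ha) j)
    _ = x j := by rw [hsum]
  -- A ⊆ atoms
  have hAatom : ∀ a ∈ A, IsAddAtomIn (AddSubmonoid.closure A) a := by
    intro a ha
    refine ⟨AddSubmonoid.subset_closure ha, hAne a ha, ?_⟩
    intro u v hu hv hu0 hv0 heq
    obtain ⟨i, h1, h2⟩ := (hAmem a).1 ha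
    -- pick j ≠ i
    obtain ⟨j, hj⟩ : ∃ j : Fin k, j ≠ i := by
      have h1 : 1 < Fintype.card (Fin k) := by simp; omega
      exact Fintype.exists_ne_of_one_lt_card h1 i
    have huj := hclos_pos u hu hu0 j
    have hvj := hclos_pos v hv hv0 j
    have : a j = u j + v j := by rw [heq]; rfl
    have := h2 j hj
    omega
  -- atoms ⊆ A
  have hatomA : ∀ a, IsAddAtomIn (AddSubmonoid.closure A) a → a ∈ A := by
    rintro a ⟨haS, ha0, hirr⟩
    obtain ⟨l, hl, hsum⟩ := AddSubmonoid.exists_multiset_of_mem_closure haS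
    rcases l.empty_or_exists_mem with h | ⟨b, hb⟩
    · subst h; exact absurd hsum.symm ha0
    obtain ⟨t, rfl⟩ := Multiset.exists_cons_of_mem hb
    rcases t.empty_or_exists_mem with h | ⟨c, hc⟩
    · rw [h, Multiset.cons_zero, Multiset.sum_singleton] at hsum
      rw [← hsum]
      exact hl b (Multiset.mem_cons_self b t)
    · exfalso
      have hbA := hl b (Multiset.mem_cons_self b t)
      have htA : ∀ x ∈ t, x ∈ A := fun x hx => hl x (Multiset.mem_cons_of_mem hx)
      have htS : t.sum ∈ AddSubmonoid.closure A :=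
        AddSubmonoid.multiset_sum_mem _ t (fun x hx => AddSubmonoid.subset_closure (htA x hx))
      have ht0 : t.sum ≠ 0 := by
        intro h0
        have h1 : (1:ℕ) ≤ t.card := Multiset.card_pos_iff_exists_mem.2 ⟨c, hc⟩
        have h2 := card_le_sum t ⟨0, hk0⟩ (fun x hx => hApos x (htA x hx) _)
        have h3 : (1:ℕ) ≤ 0 := by
          calc (1:ℕ) ≤ t.card := h1
          _ ≤ t.sum ⟨0, hk0⟩ := h2
          _ = 0 := by rw [h0]; rfl
        omega
      exact hirr b t.sum (AddSubmonoid.subset_closure hbA) htS (hAne b hbA) ht0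
        (by rw [← hsum, Multiset.sum_cons])
  have hiff : ∀ a, IsAddAtomIn (AddSubmonoid.closure A) a ↔ a ∈ A :=
    fun a => ⟨hatomA a, hAatom a⟩
  -- the canonical k-atom decomposition
  have hdecomp : ∀ x : Fin k → ℕ, (∀ j, k ≤ x j) →
      ∃ l : Multiset (Fin k → ℕ), l.card = k ∧ (∀ a ∈ l, a ∈ A) ∧ l.sum = x := by
    intro x hx
    set f : Fin k → (Fin k → ℕ) := fun i j => if j = i then x i - (k-1) else 1 with hf
    refine ⟨Finset.univ.val.map f, by simp, ?_, ?_⟩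
    · intro a ha
      rw [Multiset.mem_map] at ha
      obtain ⟨i, _, rfl⟩ := ha
      rw [hAmem]
      refine ⟨i, fun j => ?_, fun j hj => ?_⟩
      · simp only [hf]; split
        · have := hx i; omega
        · omega
      · simp only [hf, if_neg hj]
    · funext j
      rw [sum_apply_multiset, Multiset.map_map]
      have : Finset.univ.val.map ((fun a => a j) ∘ f)
          = Finset.univ.val.map (fun i => if j = i then x i - (k-1) else 1) := by
        congr 1
      rw [this]
      have heval : (Finset.univ.val.map (fun i : Fin k => if j = i then x i - (k-1) else 1)).sum
          = ∑ i : Fin k, (if j = i then x i - (k-1) else 1) := rfl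
      rw [heval, ← Finset.add_sum_erase _ _ (Finset.mem_univ j), if_pos rfl]
      have hrest : ∑ i ∈ Finset.univ.erase j, (if j = i then x i - (k-1) else 1) = k - 1 := by
        rw [Finset.sum_congr rfl (fun i hi => if_neg (Ne.symm (Finset.ne_of_mem_erase hi)))]
        rw [Finset.sum_const, smul_eq_mul, mul_one,
          Finset.card_erase_of_mem (Finset.mem_univ j)]
        simp
      rw [hrest]
      have := hx j
      omega
  constructor
  · -- atomic
    intro x hx hx0
    obtain ⟨l, hl, hsum⟩ := AddSubmonoid.exists_multiset_of_mem_closure hx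
    exact ⟨l, fun a ha => hAatom a (hl a ha), hsum⟩
  refine ⟨hiff, ?_, ?_⟩
  · -- k-furcus
    intro x hx hx0
    obtain ⟨l, hl, hsum⟩ := AddSubmonoid.exists_multiset_of_mem_closure hx
    by_cases hc : l.card ≤ k
    · exact ⟨l, hc, fun a ha => hAatom a (hl a ha), hsum⟩
    · push_neg at hc
      have hxk : ∀ j, k ≤ x j := by
        intro j
        have := card_le_sum l j (fun a ha => hApos a (hl a ha) j)
        rw [hsum] at this; omega
      obtain ⟨m, hm, hmA, hmsum⟩ := hdecomp x hxk
      exact ⟨m, hm.le, fun a ha => hAatom a (hmA a ha), hmsum⟩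
  · -- not (k-1)-furcus
    intro hF
    set x : Fin k → ℕ := fun _ => k + 1 with hxdef
    obtain ⟨l0, hc0, hA0, hs0⟩ := hdecomp x (fun j => by simp [hxdef])
    have hxmem : x ∈ AddSubmonoid.closure A := by
      rw [← hs0]
      exact AddSubmonoid.multiset_sum_mem _ l0
        (fun a ha => AddSubmonoid.subset_closure (hA0 a ha))
    have hx0 : x ≠ 0 := by
      intro h
      have : x ⟨0, hk0⟩ = 0 := by rw [h]; rfl
      simp [hxdef] at this
    obtain ⟨l, hcard, hatoms, hsum⟩ := hF x hxmem hx0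
    have hlA : ∀ a ∈ l, a ∈ A := fun a ha => (hiff a).1 (hatoms a ha)
    -- for each j, some atom has a j ≥ 2
    have hbig : ∀ j : Fin k, ∃ a ∈ l, 2 ≤ a j := by
      intro j
      by_contra h
      push_neg at h
      have : ∀ a ∈ l, a j ≤ 1 := fun a ha => by have := h a ha; omega
      have h2 := sum_le_card l j this
      rw [hsum] at h2
      simp only [hxdef] at h2
      omega
    choose f hf1 hf2 using hbig
    have hinj : Function.Injective f := by
      intro j1 j2 he
      by_contra hne
      obtain ⟨i, _, h2⟩ := (hAmem (f j1)).1 (hlA _ (hf1 j1))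
      have e1 : j1 = i := by
        by_contra h
        have ha := h2 j1 h
        have hb := hf2 j1
        omega
      have e2 : j2 = i := by
        by_contra h
        have ha := h2 j2 h
        have hb := hf2 j2
        rw [← he] at hb
        omega
      exact hne (e1.trans e2.symm)
    have hk_le : k ≤ l.toFinset.card := by
      have h1 : (Finset.univ : Finset (Fin k)).card ≤ l.toFinset.card :=
        Finset.card_le_card_of_injOn f
          (fun j _ => Multiset.mem_toFinset.2 (hf1 j)) hinj.injOn
      simpa using h1
    have := Multiset.toFinset_card_le l
    omega
end

section
/- Let q be a positive rational and let n ≥ 2 be such that α = q^{1/n} satisfies that α, α², …, α^{n−1} are all irrational. Then the polynomial X^n − q is irreducible over ℚ. -/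
/-!
Every complex root of `X ^ n - q` has modulus `|α|`, so the constant term of a monic factor of
degree `d`, being `±` the product of its roots, has absolute value `|α| ^ d`. A proper rational
factor would therefore make `α ^ d` rational with `0 < d < n`.
-/

open Polynomial

theorem Polynomial.Splits.norm_coeff_zero_of_monic {K : Type*} [NormedField K] {F : K[X]}
    (hF : F.Splits) (hm : F.Monic) {c : ℝ} (hroots : ∀ r ∈ F.roots, ‖r‖ = c) :
    ‖F.coeff 0‖ = c ^ F.natDegree := by
  rw [hF.coeff_zero_eq_prod_roots_of_monic hm, norm_mul, norm_pow, norm_neg, norm_one, one_pow,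
    one_mul, show ‖F.roots.prod‖ = (F.roots.map (‖·‖)).prod from
      map_multiset_prod (normHom : K →*₀ ℝ) _,
    Multiset.map_congr rfl hroots, Multiset.map_const', Multiset.prod_replicate,
    hF.natDegree_eq_card_roots]

lemma Complex.norm_eq_abs_of_pow_eq_ofReal_pow {n : ℕ} (hn : n ≠ 0) {r : ℂ} {α : ℝ}
    (h : r ^ n = ((α ^ n : ℝ) : ℂ)) : ‖r‖ = |α| :=
  (pow_left_inj₀ (norm_nonneg r) (abs_nonneg α) hn).mp <| by
    rw [← norm_pow, h, Complex.norm_real, Real.norm_eq_abs, abs_pow]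

lemma abs_pow_natDegree_eq_abs_coeff_zero_of_dvd_X_pow_sub_C {q : ℚ} {n : ℕ} (hn : n ≠ 0)
    {α : ℝ} (hroot : α ^ n = q) {f : ℚ[X]} (hf : f.Monic) (hdvd : f ∣ X ^ n - C q) :
    |α| ^ f.natDegree = |(f.coeff 0 : ℝ)| := by
  set F : ℂ[X] := f.map (algebraMap ℚ ℂ)
  have hroots : ∀ r ∈ F.roots, ‖r‖ = |α| := by
    intro r hr
    have hr' : ((X ^ n - C q : ℚ[X]).map (algebraMap ℚ ℂ)).IsRoot r :=
      (isRoot_of_mem_roots hr).dvd (Polynomial.map_dvd _ hdvd)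
    simp only [Polynomial.map_sub, Polynomial.map_pow, map_X, map_C, IsRoot.def, eval_sub,
      eval_pow, eval_X, eval_C, sub_eq_zero] at hr'
    exact Complex.norm_eq_abs_of_pow_eq_ofReal_pow hn (by rw [hr', hroot]; norm_cast)
  have h := (IsAlgClosed.splits F).norm_coeff_zero_of_monic (hf.map _) hroots
  rwa [natDegree_map, coeff_map, eq_ratCast, ← Complex.ofReal_ratCast, Complex.norm_real,
    Real.norm_eq_abs, eq_comm] at h

theorem stmt_4_general (q : ℚ) (n : ℕ) (hn : 2 ≤ n) (α : ℝ)
    (hroot : α ^ n = (q : ℝ))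
    (hirr : ∀ i, 1 ≤ i → i < n → Irrational (α ^ i)) :
    Irreducible (Polynomial.X ^ n - Polynomial.C q) := by
  have hn0 : n ≠ 0 := by omega
  have hne_one : (X ^ n - C q : ℚ[X]) ≠ 1 := fun h =>
    hn0 <| by simpa using congrArg natDegree h
  rw [(monic_X_pow_sub_C q hn0).irreducible_iff_lt_natDegree_lt hne_one]
  intro f hf hdeg hdvd
  rw [Finset.mem_Ioc, natDegree_X_pow_sub_C] at hdeg
  have habs := abs_pow_natDegree_eq_abs_coeff_zero_of_dvd_X_pow_sub_C hn0 hroot hf hdvd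
  have hirr_f := hirr f.natDegree hdeg.1 (by omega)
  rw [← abs_pow] at habs
  rcases abs_eq_abs.mp habs with h | h
  · exact hirr_f.ne_rat (f.coeff 0) h
  · exact hirr_f.ne_rat (-f.coeff 0) (by rw [h]; push_cast; rfl)

/-- If `α = q^{1/n}` is a positive irreducible `n`-th root of a positive rational `q`
(i.e. `α, α², …, α^{n-1}` are all irrational), then `X^n - q` is irreducible over `ℚ`. -/
theorem stmt_4 (q : ℚ) (hq : 0 < q) (n : ℕ) (hn : 2 ≤ n) (α : ℝ)
    (hαpos : 0 < α) (hroot : α ^ n = (q : ℝ))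
    (hirr : ∀ i, 1 ≤ i → i < n → Irrational (α ^ i)) :
    Irreducible (Polynomial.X ^ n - Polynomial.C q) :=
  stmt_4_general q n hn α hroot hirr
end

section
/- Let q be a positive rational and let α be a positive irreducible n-th root of q (i.e., α = q^{1/n} with α, α², …, α^{n−1} all irrational). Then 1, α, α², …, α^{n−1} are linearly independent over ℚ. -/
/-!
The minimal polynomial `p` of `α` over `ℚ` divides `X ^ n - q`, so every complex root of `p`
has modulus `q ^ (1/n) = α`. Its constant term is, up to sign, the product of these roots, hence
a rational number of absolute value `α ^ deg p`. As `α ^ i` is irrational for `0 < i < n`, this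
forces `deg p = n`, and the powers of `α` below the degree of its minimal polynomial are
linearly independent.
-/

open Polynomial

theorem Polynomial.norm_coeff_zero_eq_pow_natDegree {K : Type*} [NormedField K] [IsAlgClosed K]
    {p : K[X]} (hp : p.Monic) {r : ℝ} (hroots : ∀ z ∈ p.roots, ‖z‖ = r) :
    ‖p.coeff 0‖ = r ^ p.natDegree := by
  have hsplit := IsAlgClosed.splits p
  have hnorms : p.roots.map (‖·‖) = Multiset.replicate p.natDegree r := by
    refine Multiset.eq_replicate.mpr
      ⟨by rw [Multiset.card_map, splits_iff_card_roots.mp hsplit], fun _ hb => ?_⟩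
    obtain ⟨z, hz, rfl⟩ := Multiset.mem_map.mp hb
    exact hroots z hz
  rw [hsplit.coeff_zero_eq_prod_roots_of_monic hp, norm_mul, norm_pow, norm_neg, norm_one,
    one_pow, one_mul]
  calc ‖p.roots.prod‖ = (p.roots.map (‖·‖)).prod :=
        map_multiset_prod (normHom : K →*₀ ℝ) _
    _ = r ^ p.natDegree := by rw [hnorms, Multiset.prod_replicate]

section PowEqRat

variable {α : ℝ} {n : ℕ} {q : ℚ}

theorem minpoly_dvd_X_pow_sub_C (hroot : α ^ n = q) : minpoly ℚ α ∣ X ^ n - C q :=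
  minpoly.dvd ℚ α (by simp [hroot])

theorem isIntegral_of_pow_eq_ratCast (hn : n ≠ 0) (hroot : α ^ n = q) : IsIntegral ℚ α :=
  ⟨X ^ n - C q, monic_X_pow_sub_C q hn, by simp [hroot]⟩

theorem natDegree_minpoly_le_of_pow_eq_ratCast (hn : n ≠ 0) (hroot : α ^ n = q) :
    (minpoly ℚ α).natDegree ≤ n :=
  (natDegree_le_of_dvd (minpoly_dvd_X_pow_sub_C hroot)
    (X_pow_sub_C_ne_zero (Nat.pos_of_ne_zero hn) q)).trans_eq natDegree_X_pow_sub_C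

theorem norm_eq_of_mem_roots_map_minpoly (hα : 0 < α) (hn : n ≠ 0) (hroot : α ^ n = q)
    {z : ℂ} (hz : z ∈ ((minpoly ℚ α).map (algebraMap ℚ ℂ)).roots) : ‖z‖ = α := by
  have hp := (mem_roots_map (minpoly.ne_zero (isIntegral_of_pow_eq_ratCast hn hroot))).1 hz
  obtain ⟨r, hr⟩ := minpoly_dvd_X_pow_sub_C hroot
  have hzn : z ^ n = (α : ℂ) ^ n := by
    have := congrArg (eval₂ (algebraMap ℚ ℂ) z) hr
    rw [eval₂_mul, hp, zero_mul] at this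
    simpa [sub_eq_zero, ← Complex.ofReal_pow, hroot] using this
  refine (pow_left_inj₀ (norm_nonneg z) hα.le hn).1 ?_
  rw [← norm_pow, hzn, norm_pow, Complex.norm_real, Real.norm_of_nonneg hα.le]

theorem not_irrational_pow_natDegree_minpoly (hα : 0 < α) (hn : n ≠ 0) (hroot : α ^ n = q) :
    ¬Irrational (α ^ (minpoly ℚ α).natDegree) := by
  have hmonic := (minpoly.monic (isIntegral_of_pow_eq_ratCast hn hroot)).map (algebraMap ℚ ℂ)
  have hcoeff := norm_coeff_zero_eq_pow_natDegree hmonic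
    fun z hz => norm_eq_of_mem_roots_map_minpoly hα hn hroot hz
  rw [natDegree_map, coeff_map] at hcoeff
  rw [← hcoeff]
  exact fun h => h ⟨|(minpoly ℚ α).coeff 0|, by simp⟩

end PowEqRat

theorem stmt_5_general (q : ℚ) (n : ℕ) (hn : 1 ≤ n) (α : ℝ)
    (hαpos : 0 < α) (hroot : α ^ n = (q : ℝ))
    (hirr : ∀ i, 1 ≤ i → i < n → Irrational (α ^ i)) :
    LinearIndependent ℚ (fun i : Fin n => α ^ (i : ℕ)) := by
  have hn0 : n ≠ 0 := Nat.one_le_iff_ne_zero.mp hn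
  have hdeg : (minpoly ℚ α).natDegree = n := by
    refine (natDegree_minpoly_le_of_pow_eq_ratCast hn0 hroot).antisymm (not_lt.mp fun hlt => ?_)
    exact not_irrational_pow_natDegree_minpoly hαpos hn0 hroot
      (hirr _ (minpoly.natDegree_pos (isIntegral_of_pow_eq_ratCast hn0 hroot)) hlt)
  exact hdeg ▸ linearIndependent_pow α

/-- If `α = q^{1/n}` is a positive irreducible `n`-th root of a positive rational `q`
(i.e. `α, α², …, α^{n-1}` are all irrational), then `1, α, …, α^{n-1}` are linearly
independent over `ℚ`. -/
theorem stmt_5 (q : ℚ) (hq : 0 < q) (n : ℕ) (hn : 1 ≤ n) (α : ℝ)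
    (hαpos : 0 < α) (hroot : α ^ n = (q : ℝ))
    (hirr : ∀ i, 1 ≤ i → i < n → Irrational (α ^ i)) :
    LinearIndependent ℚ (fun i : Fin n => α ^ (i : ℕ)) :=
  stmt_5_general q n hn α hαpos hroot hirr
end

section
/- Let q be a non-integer positive rational that is not the reciprocal of any integer, and let α be a positive irreducible n-th root of q. Then the additive monoid ℕ₀[α] is atomic, and its set of atoms is exactly {α^k : k ∈ ℕ₀}. -/
section OrderedSum

variable {ι R : Type*} [AddCommMonoid R] [PartialOrder R] [IsOrderedAddMonoid R] {f : ι → R}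

lemma single_le_sum_map (hf : ∀ i, 0 ≤ f i) {L : Multiset ι} {i : ι} (hi : i ∈ L) :
    f i ≤ (L.map f).sum :=
  Multiset.single_le_sum (by simpa using fun j _ => hf j) _ (Multiset.mem_map_of_mem f hi)

lemma sum_map_pos (hf : ∀ i, 0 < f i) {L : Multiset ι} (hL : L ≠ 0) : 0 < (L.map f).sum := by
  obtain ⟨i, hi⟩ := Multiset.exists_mem_of_ne_zero hL
  exact (hf i).trans_le (single_le_sum_map (fun j => (hf j).le) hi)

end OrderedSum

section Generators

variable {ι R : Type*} [AddCommMonoid R] {f : ι → R}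

lemma mem_closure_range_iff_exists_multiset {x : R} :
    x ∈ AddSubmonoid.closure (Set.range f) ↔ ∃ L : Multiset ι, (L.map f).sum = x := by
  refine ⟨fun hx => ?_, ?_⟩
  · induction hx using AddSubmonoid.closure_induction with
    | mem x hx => obtain ⟨i, rfl⟩ := hx; exact ⟨{i}, by simp⟩
    | zero => exact ⟨0, by simp⟩
    | add x y _ _ ihx ihy =>
      obtain ⟨Lx, rfl⟩ := ihx
      obtain ⟨Ly, rfl⟩ := ihy
      exact ⟨Lx + Ly, by simp⟩
  · rintro ⟨L, rfl⟩
    refine AddSubmonoid.multiset_sum_mem _ _ fun x hx => ?_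
    obtain ⟨i, -, rfl⟩ := Multiset.mem_map.1 hx
    exact AddSubmonoid.subset_closure ⟨i, rfl⟩

lemma isAddAtomIn_closure_range {i : ι} (hi0 : f i ≠ 0)
    (hi : ∀ L : Multiset ι, (L.map f).sum = f i → Multiset.card L ≤ 1) :
    IsAddAtomIn (AddSubmonoid.closure (Set.range f)) (f i) := by
  refine ⟨AddSubmonoid.subset_closure ⟨i, rfl⟩, hi0, fun u v hu hv hu0 hv0 huv => ?_⟩
  obtain ⟨Lu, rfl⟩ := mem_closure_range_iff_exists_multiset.1 hu
  obtain ⟨Lv, rfl⟩ := mem_closure_range_iff_exists_multiset.1 hv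
  have hLu : 0 < Multiset.card Lu := Multiset.card_pos.2 fun h => hu0 (by simp [h])
  have hLv : 0 < Multiset.card Lv := Multiset.card_pos.2 fun h => hv0 (by simp [h])
  have := hi (Lu + Lv) (by rw [Multiset.map_add, Multiset.sum_add, huv])
  rw [Multiset.card_add] at this
  omega

lemma exists_multiset_isAddAtomIn_sum
    (hf : ∀ i, IsAddAtomIn (AddSubmonoid.closure (Set.range f)) (f i)) {x : R}
    (hx : x ∈ AddSubmonoid.closure (Set.range f)) :
    ∃ l : Multiset R,
      (∀ a ∈ l, IsAddAtomIn (AddSubmonoid.closure (Set.range f)) a) ∧ l.sum = x := by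
  obtain ⟨L, rfl⟩ := mem_closure_range_iff_exists_multiset.1 hx
  exact ⟨L.map f, by simpa using fun i _ => hf i, rfl⟩

lemma mem_range_of_isAddAtomIn_closure [PartialOrder R] [IsOrderedAddMonoid R]
    (hf : ∀ i, 0 < f i) {a : R} (ha : IsAddAtomIn (AddSubmonoid.closure (Set.range f)) a) :
    a ∈ Set.range f := by
  obtain ⟨haS, ha0, hirred⟩ := ha
  obtain ⟨L, rfl⟩ := mem_closure_range_iff_exists_multiset.1 haS
  obtain ⟨i, hi⟩ := Multiset.exists_mem_of_ne_zero (s := L) fun h => ha0 (by simp [h])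
  obtain ⟨L', rfl⟩ := Multiset.exists_cons_of_mem hi
  rcases eq_or_ne L' 0 with rfl | hL'
  · exact ⟨i, by simp⟩
  · rw [Multiset.map_cons, Multiset.sum_cons] at hirred
    exact absurd rfl (hirred _ _ (AddSubmonoid.subset_closure ⟨i, rfl⟩)
      (mem_closure_range_iff_exists_multiset.2 ⟨L', rfl⟩) (hf i).ne' (sum_map_pos hf hL').ne')

end Generators

theorem sum_pow_mul_pow_sub_ne_pow {R : Type*} [CommSemiring R] {a b : R} (hab : IsCoprime a b)
    (hb : ¬IsUnit b) {J : Multiset ℕ} {k : ℕ} (hJ : ∀ j ∈ J, j < k) :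
    (J.map fun j => a ^ j * b ^ (k - j)).sum ≠ a ^ k := by
  intro h
  refine hb (hab.pow_left.isUnit_of_dvd' (h ▸ Multiset.dvd_sum ?_) dvd_rfl)
  simp only [Multiset.mem_map]
  rintro _ ⟨j, hj, rfl⟩
  exact (dvd_pow_self b (Nat.sub_ne_zero_of_lt (hJ j hj))).mul_left _

namespace Rat

theorem sum_pow_ne_pow_of_lt {q : ℚ} (hq : q.den ≠ 1) {J : Multiset ℕ} {k : ℕ}
    (hJ : ∀ j ∈ J, j < k) : (J.map (q ^ ·)).sum ≠ q ^ k := by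
  intro h
  have hclear : ∀ j ≤ k, q ^ j * q.den ^ k = ((q.num ^ j * q.den ^ (k - j) : ℤ) : ℚ) := by
    intro j hj
    rw [← Nat.add_sub_cancel' hj, pow_add, ← mul_assoc, ← mul_pow, mul_den_eq_num,
      Nat.add_sub_cancel_left]
    push_cast; rfl
  refine sum_pow_mul_pow_sub_ne_pow q.isCoprime_num_den
    (by simpa [Int.ofNat_isUnit] using hq) hJ ?_
  have hmul := congrArg (· * (q.den : ℚ) ^ k) h
  simp only [← Multiset.sum_map_mul_right] at hmul
  rw [Multiset.map_congr rfl fun j hj => hclear j (hJ j hj).le, hclear k le_rfl] at hmul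
  simp only [Nat.sub_self, pow_zero, mul_one] at hmul
  apply Int.cast_injective (α := ℚ)
  rw [Int.cast_multiset_sum, Multiset.map_map]
  exact hmul

theorem eq_singleton_of_sum_pow_eq_pow {q : ℚ} (hq : 0 < q) (hden : q.den ≠ 1)
    (hden_inv : q⁻¹.den ≠ 1) {J : Multiset ℕ} {k : ℕ} (h : (J.map (q ^ ·)).sum = q ^ k) :
    J = {k} := by
  by_cases hk : k ∈ J
  · obtain ⟨J', rfl⟩ := Multiset.exists_cons_of_mem hk
    rw [Multiset.map_cons, Multiset.sum_cons, add_eq_left] at h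
    by_contra hJ'
    exact (sum_map_pos (fun j => pow_pos hq j) fun h0 => hJ' (by simp [h0])).ne' h
  exfalso
  have hne : ∀ j ∈ J, j ≠ k := fun j hj hjk => hk (hjk ▸ hj)
  have hle : ∀ j ∈ J, q ^ j ≤ q ^ k := fun j hj =>
    h ▸ single_le_sum_map (fun i => (pow_pos hq i).le) hj
  rcases (show q ≠ 1 by rintro rfl; exact hden rfl).lt_or_gt with hlt | hgt
  · -- reflect the exponents to pass to `q⁻¹ > 1`
    set M := (k ::ₘ J).sup
    have hM : ∀ j ∈ k ::ₘ J, j ≤ M := fun j hj => Multiset.le_sup hj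
    have hinv : ∀ j ∈ k ::ₘ J, q⁻¹ ^ (M - j) = q ^ j * q⁻¹ ^ M := fun j hj => by
      rw [pow_sub₀ _ (inv_ne_zero hq.ne') (hM j hj), inv_pow, inv_pow, inv_inv, mul_comm]
    refine sum_pow_ne_pow_of_lt hden_inv (J := J.map (M - ·)) (k := M - k) ?_ ?_
    · simp only [Multiset.mem_map]
      rintro _ ⟨j, hj, rfl⟩
      have := (pow_le_pow_iff_right_of_lt_one₀ hq hlt).1 (hle j hj)
      have := hM j (Multiset.mem_cons_of_mem hj)
      have := hne j hj
      omega
    · rw [Multiset.map_map, hinv k (Multiset.mem_cons_self k J), ← h, ← Multiset.sum_map_mul_right]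
      exact congrArg _ (Multiset.map_congr rfl fun j hj => hinv j (Multiset.mem_cons_of_mem hj))
  · exact sum_pow_ne_pow_of_lt hden
      (fun j hj => ((pow_le_pow_iff_right₀ hgt).1 (hle j hj)).lt_of_ne (hne j hj)) h

end Rat

section PowersOfRoot

open Polynomial

variable {α : ℝ} {q : ℚ} {n : ℕ}

lemma abs_coeff_zero_minpoly (hα : 0 < α) (hn : n ≠ 0) (hroot : α ^ n = q) :
    |((minpoly ℚ α).coeff 0 : ℝ)| = α ^ (minpoly ℚ α).natDegree := by
  have haeval : aeval α (X ^ n - C q) = 0 := by simp [hroot]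
  have hint : IsIntegral ℚ α := ⟨_, monic_X_pow_sub_C q hn, haeval⟩
  obtain ⟨g, hg⟩ := minpoly.dvd ℚ α haeval
  set P := (minpoly ℚ α).map (algebraMap ℚ ℂ)
  have hnorm_root : ∀ z ∈ P.roots, ‖z‖ = α := by
    intro z hz
    have hzq : z ^ n = (q : ℂ) := by
      have : aeval z (X ^ n - C q) = 0 := by rw [hg, map_mul, (mem_aroots.1 hz).2, zero_mul]
      simpa [sub_eq_zero] using this
    refine (pow_left_inj₀ (norm_nonneg z) hα.le hn).1 ?_
    rw [← norm_pow, hzq, Complex.norm_ratCast, ← hroot, abs_of_pos (by positivity)]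
  have hcoeff :=
    (IsAlgClosed.splits P).coeff_zero_eq_prod_roots_of_monic ((minpoly.monic hint).map _)
  calc |((minpoly ℚ α).coeff 0 : ℝ)| = ‖P.coeff 0‖ := by
        rw [coeff_map, eq_ratCast, Complex.norm_ratCast]
    _ = (P.roots.map (‖·‖)).prod := by
        rw [hcoeff, norm_mul, norm_pow, norm_neg, norm_one, one_pow, one_mul]
        exact map_multiset_prod (normHom : ℂ →*₀ ℝ) _
    _ = α ^ (minpoly ℚ α).natDegree := by
        rw [Multiset.map_congr rfl hnorm_root, Multiset.map_const', Multiset.prod_replicate,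
          IsAlgClosed.card_roots_eq_natDegree, natDegree_map]

lemma natDegree_minpoly_eq (hα : 0 < α) (hn : n ≠ 0) (hroot : α ^ n = q)
    (hirr : ∀ i, 1 ≤ i → i < n → Irrational (α ^ i)) : (minpoly ℚ α).natDegree = n := by
  have haeval : aeval α (X ^ n - C q) = 0 := by simp [hroot]
  have hint : IsIntegral ℚ α := ⟨_, monic_X_pow_sub_C q hn, haeval⟩
  have hle : (minpoly ℚ α).natDegree ≤ n := by
    simpa using natDegree_le_of_dvd (minpoly.dvd ℚ α haeval)
      (X_pow_sub_C_ne_zero (Nat.pos_of_ne_zero hn) q)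
  refine hle.eq_or_lt.resolve_right fun hlt => hirr _ (minpoly.natDegree_pos hint) hlt ?_
  rw [← abs_coeff_zero_minpoly hα hn hroot]
  exact ⟨|(minpoly ℚ α).coeff 0|, by push_cast; rfl⟩

lemma linearIndependent_pow_of_irrational (hα : 0 < α) (hn : n ≠ 0) (hroot : α ^ n = q)
    (hirr : ∀ i, 1 ≤ i → i < n → Irrational (α ^ i)) :
    LinearIndependent ℚ fun i : Fin n => α ^ (i : ℕ) := by
  have h := linearIndependent_pow (K := ℚ) α
  rwa [natDegree_minpoly_eq hα hn hroot hirr] at h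

lemma linearCombination_single_ofNat [NeZero n] (hroot : α ^ n = q) (e : ℕ) :
    Fintype.linearCombination ℚ (fun i : Fin n => α ^ (i : ℕ))
      (Pi.single (Fin.ofNat n e) (q ^ (e / n))) = α ^ e := by
  rw [Fintype.linearCombination_apply_single, Fin.val_ofNat, Rat.smul_def, Rat.cast_pow, ← hroot,
    ← pow_mul, ← pow_add, Nat.div_add_mod]

lemma sum_pow_div_eq_of_sum_pow_eq_pow [NeZero n]
    (hind : LinearIndependent ℚ fun i : Fin n => α ^ (i : ℕ)) (hroot : α ^ n = q) (hq : 0 < q)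
    {L : Multiset ℕ} {k : ℕ} (h : (L.map (α ^ ·)).sum = α ^ k) :
    (L.map fun e => q ^ (e / n)).sum = q ^ (k / n) := by
  -- `c e` is the coordinate vector of `α ^ e` in the basis `1, α, …, α ^ (n - 1)`
  set c : ℕ → Fin n → ℚ := fun e => Pi.single (Fin.ofNat n e) (q ^ (e / n))
  have hc : (L.map c).sum = c k := hind.fintypeLinearCombination_injective <| by
    simpa only [map_multiset_sum, Multiset.map_map, Function.comp_def, c,
      linearCombination_single_ofNat hroot] using h
  have hcoord (i : Fin n) : (L.map fun e => c e i).sum = c k i := by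
    rw [← hc, Pi.multiset_sum_apply, Multiset.map_map]; rfl
  have hc_nonneg (e : ℕ) (i : Fin n) : 0 ≤ c e i := by
    simp only [c, Pi.single_apply]; split_ifs <;> positivity
  have hmod : ∀ e ∈ L, Fin.ofNat n e = Fin.ofNat n k := by
    intro e he
    by_contra hne
    have hpos : 0 < c e (Fin.ofNat n e) := by simp [c, pow_pos hq]
    refine (hpos.trans_le
      (single_le_sum_map (f := (c · (Fin.ofNat n e))) (hc_nonneg · _) he)).ne' ?_
    rw [hcoord]
    exact Pi.single_eq_of_ne hne _
  have hcoord_k := hcoord (Fin.ofNat n k)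
  simp only [c, Pi.single_eq_same] at hcoord_k
  rw [← hcoord_k]
  exact congrArg _ (Multiset.map_congr rfl fun e he => by rw [← hmod e he, Pi.single_eq_same])

lemma card_le_one_of_sum_pow_eq_pow (hα : 0 < α) (hn : n ≠ 0) (hroot : α ^ n = q)
    (hirr : ∀ i, 1 ≤ i → i < n → Irrational (α ^ i)) (hden : q.den ≠ 1) (hden_inv : q⁻¹.den ≠ 1)
    {L : Multiset ℕ} {k : ℕ} (h : (L.map (α ^ ·)).sum = α ^ k) : Multiset.card L ≤ 1 := by
  have : NeZero n := ⟨hn⟩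
  have hq : 0 < q := by exact_mod_cast hroot ▸ pow_pos hα n
  have hsum := sum_pow_div_eq_of_sum_pow_eq_pow
    (linearIndependent_pow_of_irrational hα hn hroot hirr) hroot hq h
  have := Rat.eq_singleton_of_sum_pow_eq_pow hq hden hden_inv (J := L.map (· / n))
    (by rwa [Multiset.map_map])
  simpa using (congrArg Multiset.card this).le

end PowersOfRoot

theorem stmt_6_general (q : ℚ)
    (hqint : ¬ ∃ m : ℤ, q = (m : ℚ)) (hqrec : ¬ ∃ m : ℤ, q⁻¹ = (m : ℚ))
    (n : ℕ) (hn : 1 ≤ n) (α : ℝ) (hαpos : 0 < α) (hroot : α ^ n = (q : ℝ))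
    (hirr : ∀ i, 1 ≤ i → i < n → Irrational (α ^ i))
    (M : AddSubmonoid ℝ)
    (hM : M = AddSubmonoid.closure (Set.range fun k : ℕ => α ^ k)) :
    (∀ x ∈ M, x ≠ 0 → ∃ l : Multiset ℝ, (∀ a ∈ l, IsAddAtomIn M a) ∧ l.sum = x) ∧
    (∀ a, IsAddAtomIn M a ↔ ∃ k : ℕ, a = α ^ k) := by
  subst hM
  have hden : q.den ≠ 1 := fun h => hqint ⟨q.num, ((Rat.den_eq_one_iff q).1 h).symm⟩
  have hden_inv : q⁻¹.den ≠ 1 := fun h => hqrec ⟨q⁻¹.num, ((Rat.den_eq_one_iff _).1 h).symm⟩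
  have hpos (k : ℕ) : 0 < α ^ k := pow_pos hαpos k
  have hatom (k : ℕ) : IsAddAtomIn (AddSubmonoid.closure (Set.range (α ^ ·))) (α ^ k) :=
    isAddAtomIn_closure_range (hpos k).ne' fun _ hL =>
      card_le_one_of_sum_pow_eq_pow hαpos (by omega) hroot hirr hden hden_inv hL
  refine ⟨fun x hx _ => exists_multiset_isAddAtomIn_sum hatom hx, fun a => ⟨fun ha => ?_, ?_⟩⟩
  · obtain ⟨k, rfl⟩ := mem_range_of_isAddAtomIn_closure hpos ha
    exact ⟨k, rfl⟩
  · rintro ⟨k, rfl⟩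
    exact hatom k

/-- Let `q` be a non-integer positive rational that is not the reciprocal of an integer,
and let `α` be a positive irreducible `n`-th root of `q`. Then `ℕ₀[α]` is atomic with
set of atoms exactly `{α^k : k ∈ ℕ₀}`. -/
theorem stmt_6 (q : ℚ) (hq : 0 < q)
    (hqint : ¬ ∃ m : ℤ, q = (m : ℚ)) (hqrec : ¬ ∃ m : ℤ, q⁻¹ = (m : ℚ))
    (n : ℕ) (hn : 1 ≤ n) (α : ℝ) (hαpos : 0 < α) (hroot : α ^ n = (q : ℝ))
    (hirr : ∀ i, 1 ≤ i → i < n → Irrational (α ^ i))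
    (M : AddSubmonoid ℝ)
    (hM : M = AddSubmonoid.closure (Set.range fun k : ℕ => α ^ k)) :
    (∀ x ∈ M, x ≠ 0 → ∃ l : Multiset ℝ, (∀ a ∈ l, IsAddAtomIn M a) ∧ l.sum = x) ∧
    (∀ a, IsAddAtomIn M a ↔ ∃ k : ℕ, a = α ^ k) :=
  stmt_6_general q hqint hqrec n hn α hαpos hroot hirr M hM
end

section
/- Let q be a non-integer positive rational that is not the reciprocal of any integer, and let α be a positive irreducible n-th root of q. Then for every nonzero b ∈ ℕ₀[α], the set of lengths L(b) is an arithmetic progression with common difference |n(q) − d(q)|, where q = n(q)/d(q) in lowest terms. -/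
/-- The set of lengths of factorizations of `x` into atoms of `S`. -/
def lengthsIn {R : Type*} [AddCommMonoid R] (S : AddSubmonoid R) (x : R) : Set ℕ :=
  {ℓ | ∃ l : Multiset R, (∀ a ∈ l, IsAddAtomIn S a) ∧ l.sum = x ∧ l.card = ℓ}

/-- `S` is a (possibly finite, possibly infinite) arithmetic progression with
common difference `δ`. -/
def IsAPWith (S : Set ℕ) (δ : ℕ) : Prop :=
  ∃ (a : ℕ) (m : ℕ∞), S = {x | ∃ k : ℕ, (k : ℕ∞) < m ∧ x = a + δ * k}

open Polynomial

theorem Rat.two_le_den {q : ℚ} (hq : ¬ ∃ m : ℤ, q = m) : 2 ≤ q.den := by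
  by_contra! h
  exact hq ⟨q.num, ((Rat.den_eq_one_iff q).mp (by have := q.den_pos; omega)).symm⟩

theorem Rat.two_le_num {q : ℚ} (hq : 0 < q) (hqinv : ¬ ∃ m : ℤ, q⁻¹ = m) : 2 ≤ q.num := by
  by_contra! h
  have hnum : q.num = 1 := by have := Rat.num_pos.mpr hq; omega
  exact hqinv ⟨q.den, by rw [← Rat.num_div_den q, hnum]; simp⟩

theorem exists_mem_iff_lt_of_downward_closed {J : Set ℕ} (hJ : ∀ k ∈ J, ∀ j ≤ k, j ∈ J) :
    ∃ m : ℕ∞, ∀ k : ℕ, k ∈ J ↔ (k : ℕ∞) < m := by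
  classical
  by_cases hall : ∀ k, k ∈ J
  · exact ⟨⊤, fun k => by simp [hall k]⟩
  push Not at hall
  refine ⟨Nat.find hall, fun k => ?_⟩
  rw [Nat.cast_lt]
  exact ⟨fun hk => lt_of_not_ge fun hle => Nat.find_spec hall (hJ k hk _ hle),
    fun hlt => not_not.mp (Nat.find_min hall hlt)⟩

theorem isAPWith_of_mem_iff_sub {L : Set ℕ} {ℓ₀ e M : ℕ} (hM : e * (M - 1) ≤ ℓ₀)
    (hL : ∀ ℓ, ℓ ∈ L ↔ ∃ k < M, (ℓ : ℤ) = ℓ₀ - k * e) : IsAPWith L e := by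
  refine ⟨ℓ₀ - e * (M - 1), M, Set.ext fun ℓ => ?_⟩
  simp only [hL, Nat.cast_lt, Set.mem_ofPred_eq]
  constructor
  · rintro ⟨k, hk, hℓ⟩
    refine ⟨M - 1 - k, by omega, ?_⟩
    zify [hM, show k ≤ M - 1 by omega, show 1 ≤ M by omega] at hℓ ⊢
    linear_combination hℓ
  · rintro ⟨k, hk, rfl⟩
    refine ⟨M - 1 - k, by omega, ?_⟩
    zify [hM, show k ≤ M - 1 by omega, show 1 ≤ M by omega]
    ring

theorem isAPWith_of_segment_closed {L : Set ℕ} (ℓ₀ : ℕ) {d : ℤ}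
    (hL : ∀ ℓ ∈ L, ∃ k : ℕ, (ℓ : ℤ) = ℓ₀ + k * d ∧ ∀ j ≤ k, ∃ ℓ' ∈ L, (ℓ' : ℤ) = ℓ₀ + j * d) :
    IsAPWith L d.natAbs := by
  set J := {k : ℕ | ∃ ℓ ∈ L, (ℓ : ℤ) = ℓ₀ + k * d}
  have hmemL : ∀ ℓ : ℕ, ℓ ∈ L ↔ ∃ k ∈ J, (ℓ : ℤ) = ℓ₀ + k * d := by
    refine fun ℓ => ⟨fun hℓ => ?_, fun ⟨k, ⟨ℓ', hℓ', hk'⟩, hk⟩ => ?_⟩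
    · obtain ⟨k, hk, -⟩ := hL ℓ hℓ
      exact ⟨k, ⟨ℓ, hℓ, hk⟩, hk⟩
    · rwa [show ℓ = ℓ' by omega]
  have hJ : ∀ k ∈ J, ∀ j ≤ k, j ∈ J := by
    rintro k ⟨ℓ, hℓ, hk⟩ j hj
    rcases eq_or_ne d 0 with rfl | hd
    · exact ⟨ℓ, hℓ, by simpa using hk⟩
    obtain ⟨k', hk', hmid⟩ := hL ℓ hℓ
    obtain rfl : k' = k := by
      exact_mod_cast mul_right_cancel₀ hd (add_left_cancel (hk'.symm.trans hk))
    exact hmid j hj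
  obtain ⟨m, hm⟩ := exists_mem_iff_lt_of_downward_closed hJ
  rcases le_or_gt 0 d with hd | hd
  · obtain ⟨e, rfl⟩ := Int.eq_ofNat_of_zero_le hd
    refine ⟨ℓ₀, m, Set.ext fun ℓ => ?_⟩
    simp only [hmemL, hm, Int.natAbs_natCast, Set.mem_ofPred_eq, mul_comm _ (e : ℤ)]
    exact_mod_cast Iff.rfl
  · obtain ⟨e, rfl⟩ : ∃ e : ℕ, d = -e := ⟨d.natAbs, by omega⟩
    have hbound : ∀ k ∈ J, e * k ≤ ℓ₀ := by
      rintro k ⟨ℓ, -, hk⟩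
      zify
      linarith [Int.natCast_nonneg ℓ]
    obtain ⟨M, rfl⟩ : ∃ M : ℕ, (M : ℕ∞) = m := by
      refine ENat.ne_top_iff_exists.mp fun htop => ?_
      have := hbound (ℓ₀ + 1) ((hm _).mpr (htop ▸ ENat.natCast_lt_top _))
      nlinarith
    simp only [Nat.cast_lt] at hm
    rw [Int.natAbs_neg, Int.natAbs_natCast]
    refine isAPWith_of_mem_iff_sub (ℓ₀ := ℓ₀) (M := M) ?_ fun ℓ => by
      simp [hmemL, hm, sub_eq_add_neg]
    rcases M.eq_zero_or_pos with rfl | hM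
    · simp
    · exact hbound _ ((hm _).mpr (by omega))

theorem IsAddAtomIn.mem_of_closure {R : Type*} [AddCommMonoid R] {S : Set R} (hS : 0 ∉ S)
    {x : R} (hx : IsAddAtomIn (AddSubmonoid.closure S) x) : x ∈ S := by
  induction hx.1 using AddSubmonoid.closure_induction_left with
  | zero => exact absurd rfl hx.2.1
  | add_left s hs y hy _ =>
    by_cases hy0 : y = 0
    · simpa [hy0] using hs
    · exact absurd rfl <|
        hx.2.2 s y (AddSubmonoid.subset_closure hs) hy (ne_of_mem_of_not_mem hs hS) hy0

theorem mem_closure_range_pow_iff {R : Type*} [CommSemiring R] {α x : R} :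
    x ∈ AddSubmonoid.closure (Set.range fun k : ℕ => α ^ k) ↔ ∃ f : ℕ[X], aeval α f = x := by
  constructor
  · intro hx
    induction hx using AddSubmonoid.closure_induction with
    | mem _ h => obtain ⟨k, rfl⟩ := h; exact ⟨X ^ k, by simp⟩
    | zero => exact ⟨0, map_zero _⟩
    | add _ _ _ _ hx hy =>
      obtain ⟨f, rfl⟩ := hx
      obtain ⟨g, rfl⟩ := hy
      exact ⟨f + g, map_add _ _ _⟩
  · rintro ⟨f, rfl⟩
    rw [aeval_eq_sum_range]
    exact sum_mem fun k _ => nsmul_mem (AddSubmonoid.subset_closure (Set.mem_range_self k)) _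

theorem eval_one_ne_zero_of_ne_zero {f : ℕ[X]} (hf : f ≠ 0) : f.eval 1 ≠ 0 := by
  simpa [eval_eq_sum, Polynomial.sum_def, Finset.sum_eq_zero_iff, Polynomial.ext_iff] using hf

theorem lengthsIn_eq_of_isAddAtomIn_iff {R : Type*} [CommSemiring R] {α : R} {S : AddSubmonoid R}
    (hatom : ∀ u, IsAddAtomIn S u ↔ ∃ k : ℕ, α ^ k = u) (x : R) :
    lengthsIn S x = {ℓ | ∃ f : ℕ[X], aeval α f = x ∧ f.eval 1 = ℓ} := by
  ext ℓ
  constructor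
  · rintro ⟨l, hl, rfl, rfl⟩
    induction l using Multiset.induction_on with
    | empty => exact ⟨0, by simp, by simp⟩
    | cons u l ih =>
      obtain ⟨k, rfl⟩ := (hatom u).mp (hl u (Multiset.mem_cons_self u l))
      obtain ⟨f, hf, hfl⟩ := ih fun v hv => hl v (Multiset.mem_cons_of_mem hv)
      exact ⟨X ^ k + f, by simp [hf], by simp [hfl, add_comm]⟩
  · rintro ⟨f, rfl, rfl⟩
    induction f using Polynomial.induction_on' with
    | add f g hf hg =>
      obtain ⟨l₁, hl₁, hs₁, hc₁⟩ := hf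
      obtain ⟨l₂, hl₂, hs₂, hc₂⟩ := hg
      refine ⟨l₁ + l₂, fun u hu => ?_, by simp [hs₁, hs₂], by simp [hc₁, hc₂]⟩
      rcases Multiset.mem_add.mp hu with hu | hu
      exacts [hl₁ u hu, hl₂ u hu]
    | monomial k c =>
      refine ⟨Multiset.replicate c (α ^ k), fun u hu => ?_, by simp, by simp⟩
      exact (hatom u).mpr ⟨k, (Multiset.eq_of_mem_replicate hu).symm⟩

theorem abs_coeff_zero_eq_pow_natDegree {p : ℚ[X]} (hp : p.Monic) {ρ : ℝ}
    (hroots : ∀ z : ℂ, aeval z p = 0 → ‖z‖ = ρ) : |(p.coeff 0 : ℝ)| = ρ ^ p.natDegree := by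
  set P := p.map (algebraMap ℚ ℂ)
  have hsplit : Splits P := IsAlgClosed.splits P
  have hcoeff := congrArg norm (hsplit.coeff_zero_eq_prod_roots_of_monic (hp.map _))
  have hprod : ‖P.roots.prod‖ = ρ ^ P.roots.card := by
    rw [show ‖P.roots.prod‖ = (P.roots.map norm).prod from
        map_multiset_prod (normHom : ℂ →*₀ ℝ) _, Multiset.map_congr rfl fun z hz => hroots z ?_,
      Multiset.map_const', Multiset.prod_replicate]
    rwa [mem_roots_map hp.ne_zero, ← aeval_def] at hz
  rw [coeff_map, eq_ratCast, Complex.norm_ratCast, norm_mul, norm_pow, norm_neg, norm_one, one_pow,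
    one_mul, hprod, ← hsplit.natDegree_eq_card_roots, natDegree_map] at hcoeff
  exact hcoeff

theorem minpoly_eq_X_pow_sub_C {q : ℚ} {n : ℕ} (hn : n ≠ 0) {α : ℝ} (hα : 0 < α)
    (hroot : α ^ n = q) (hirr : ∀ i, 1 ≤ i → i < n → Irrational (α ^ i)) :
    minpoly ℚ α = X ^ n - C q := by
  have hmonic : (X ^ n - C q : ℚ[X]).Monic := monic_X_pow_sub_C q hn
  have haeval : aeval α (X ^ n - C q : ℚ[X]) = 0 := by simp [hroot]
  have hint : IsIntegral ℚ α := ⟨_, hmonic, haeval⟩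
  have hdvd : minpoly ℚ α ∣ X ^ n - C q := minpoly.dvd ℚ α haeval
  have hle : (minpoly ℚ α).natDegree ≤ n := by
    simpa using natDegree_le_of_dvd hdvd (X_pow_sub_C_ne_zero (Nat.pos_of_ne_zero hn) q)
  have hroots : ∀ z : ℂ, aeval z (minpoly ℚ α) = 0 → ‖z‖ = α := by
    intro z hz
    have hzn : z ^ n = q := by
      obtain ⟨r, hr⟩ := hdvd
      have := congrArg (aeval z) hr
      rwa [map_mul, hz, zero_mul, map_sub, map_pow, aeval_X, aeval_C, eq_ratCast,
        sub_eq_zero] at this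
    rw [← pow_left_inj₀ (norm_nonneg z) hα.le hn, ← norm_pow, hzn, hroot, Complex.norm_ratCast,
      abs_of_pos (hroot ▸ pow_pos hα n)]
  have hrat : ¬ Irrational (α ^ (minpoly ℚ α).natDegree) := by
    rw [← abs_coeff_zero_eq_pow_natDegree (minpoly.monic hint) hroots, ← Rat.cast_abs]
    exact Rat.not_irrational _
  have hdeg : (minpoly ℚ α).natDegree = n :=
    hle.antisymm (not_lt.mp fun hlt => hrat (hirr _ (minpoly.natDegree_pos hint) hlt))
  exact (eq_of_monic_of_dvd_of_natDegree_le (minpoly.monic hint) hmonic hdvd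
    (by simp [hdeg])).symm

theorem isPrimitive_C_mul_X_pow_sub_C {b c : ℤ} (hbc : IsCoprime b c) {n : ℕ} (hn : n ≠ 0) :
    (C b * X ^ n - C c).IsPrimitive := by
  intro r hr
  rw [C_dvd_iff_dvd_coeff] at hr
  have hb : r ∣ b := by
    simpa only [coeff_sub, coeff_C_mul_X_pow, coeff_C, hn, if_true, if_false, sub_zero] using hr n
  have hc : r ∣ c := by simpa [coeff_X_pow, Ne.symm hn] using hr 0
  exact hbc.isUnit_of_dvd' hb hc

theorem C_den_mul_X_pow_sub_C_num_dvd {A : Type*} [CommRing A] [Algebra ℚ A] {α : A} {q : ℚ}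
    {n : ℕ} (hn : n ≠ 0) (hmin : minpoly ℚ α = X ^ n - C q) {p : ℤ[X]} (hp : aeval α p = 0) :
    C (q.den : ℤ) * X ^ n - C q.num ∣ p := by
  have hcop : IsCoprime (q.den : ℤ) q.num := by
    rw [Int.isCoprime_iff_gcd_eq_one, Int.gcd_comm]; exact q.reduced
  refine (isPrimitive_C_mul_X_pow_sub_C hcop hn).dvd_of_fraction_map_dvd_fraction_map (K := ℚ) ?_
  have hden : (q.den : ℚ) ≠ 0 := by positivity
  have hmap : (C (q.den : ℤ) * X ^ n - C q.num).map (algebraMap ℤ ℚ) =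
      C (q.den : ℚ) * minpoly ℚ α := by
    rw [hmin, mul_sub, ← C_mul, mul_comm (q.den : ℚ), Rat.mul_den_eq_num]
    simp
  rw [hmap, (isUnit_C.mpr hden.isUnit).mul_left_dvd]
  exact minpoly.dvd ℚ α (by rwa [aeval_map_algebraMap])

theorem eq_zero_of_dvd_of_abs_coeff_lt {b c : ℤ} {n : ℕ} (hn : n ≠ 0) {p : ℤ[X]}
    (hdvd : C b * X ^ n - C c ∣ p) (hp : ∀ i, |p.coeff (i + n)| < b) : p = 0 := by
  obtain ⟨h, rfl⟩ := hdvd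
  by_contra hne
  have hh : h ≠ 0 := by rintro rfl; exact hne (mul_zero _)
  have htop : ((C b * X ^ n - C c) * h).coeff (h.natDegree + n) = b * h.leadingCoeff := by
    rw [sub_mul, coeff_sub, mul_assoc, coeff_C_mul, mul_comm, coeff_X_pow_mul, coeff_C_mul,
      coeff_eq_zero_of_natDegree_lt (by omega : h.natDegree < h.natDegree + n), mul_zero,
      sub_zero, leadingCoeff, mul_comm]
  have hb : b ≠ 0 := ((abs_nonneg _).trans_lt (hp 0)).ne'
  have := Int.eq_zero_of_abs_lt_dvd ⟨_, htop⟩ (hp _)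
  rw [htop] at this
  exact mul_ne_zero hb (leadingCoeff_ne_zero.mpr hh) this

namespace PowerMonoid

variable (a b n : ℕ)

-- `ℕ[X]` has no subtraction, so trading `b • X^(i+n)` for `a • X^i` is stated additively.
def Step (f g : ℕ[X]) : Prop := ∃ i, g + C b * X ^ (i + n) = f + C a * X ^ i

def IsReduced (f : ℕ[X]) : Prop := ∀ i, f.coeff (i + n) < b

variable {a b n}

theorem Step.aeval_eq {R : Type*} [CommRing R] {α : R} (hα : (b : R) * α ^ n = a)
    {f g : ℕ[X]} (h : Step a b n f g) : aeval α g = aeval α f := by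
  obtain ⟨i, hi⟩ := h
  have hval := congrArg (aeval α) hi
  simp only [map_add, map_mul, map_pow, aeval_X, eq_natCast, map_natCast] at hval
  linear_combination hval - α ^ i * hα

theorem Step.eval_one {f g : ℕ[X]} (h : Step a b n f g) : g.eval 1 + b = f.eval 1 + a := by
  obtain ⟨i, hi⟩ := h
  simpa using congrArg (eval 1) hi

theorem Step.eval_lt (hb : 1 ≤ b) (hn : 1 ≤ n) {f g : ℕ[X]} (h : Step a b n f g) :
    g.eval (a + 1) < f.eval (a + 1) := by
  obtain ⟨i, hi⟩ := h
  have hval := congrArg (eval (a + 1)) hi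
  simp only [eval_add, eval_mul, eval_C, eval_pow, eval_X] at hval
  have : a * (a + 1) ^ i < b * (a + 1) ^ (i + n) :=
    calc a * (a + 1) ^ i < (a + 1) ^ (i + 1) := by rw [pow_succ']; gcongr; omega
      _ ≤ b * (a + 1) ^ (i + n) := le_mul_of_one_le_of_le hb (by gcongr; omega)
  omega

theorem exists_isReduced_reflTransGen (hb : 1 ≤ b) (hn : 1 ≤ n) (f : ℕ[X]) :
    ∃ r, IsReduced b n r ∧ Relation.ReflTransGen (Step a b n) f r := by
  induction hμ : f.eval (a + 1) using Nat.strong_induction_on generalizing f with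
  | _ μ ih =>
    by_cases hf : IsReduced b n f
    · exact ⟨f, hf, .refl⟩
    obtain ⟨i, hi⟩ : ∃ i, b ≤ f.coeff (i + n) := by simpa [IsReduced] using hf
    set g := f.erase (i + n) + C (f.coeff (i + n) - b) * X ^ (i + n) + C a * X ^ i
    have hstep : Step a b n f g := ⟨i, by
      conv_rhs => rw [← monomial_add_erase f (i + n)]
      rw [← C_mul_X_pow_eq_monomial, add_right_comm, add_assoc _ _ (C b * _), ← add_mul, ← C_add,
        Nat.sub_add_cancel hi]
      ring⟩
    obtain ⟨r, hr, hgr⟩ := ih _ (hμ ▸ hstep.eval_lt hb hn) g rfl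
    exact ⟨r, hr, .head hstep hgr⟩

theorem aeval_eq_of_reflTransGen {R : Type*} [CommRing R] {α : R} (hα : (b : R) * α ^ n = a)
    {f g : ℕ[X]} (h : Relation.ReflTransGen (Step a b n) f g) : aeval α g = aeval α f := by
  induction h with
  | refl => rfl
  | tail _ hstep ih => rw [hstep.aeval_eq hα, ih]

theorem exists_lengths_of_reflTransGen {f r : ℕ[X]}
    (h : Relation.ReflTransGen (Step a b n) f r) :
    ∃ k : ℕ, (↑(f.eval 1) : ℤ) = r.eval 1 + k * (b - a) ∧
      ∀ j ≤ k, ∃ g, Relation.ReflTransGen (Step a b n) g r ∧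
        (↑(g.eval 1) : ℤ) = r.eval 1 + j * (b - a) := by
  induction h using Relation.ReflTransGen.head_induction_on with
  | refl => exact ⟨0, by simp, fun j hj => ⟨r, .refl, by simp [Nat.le_zero.mp hj]⟩⟩
  | @head f g hstep hgr ih =>
    obtain ⟨k, hk, hmid⟩ := ih
    have hlen : (↑(g.eval 1) : ℤ) + b = ↑(f.eval 1) + a := by exact_mod_cast hstep.eval_one
    refine ⟨k + 1, by push_cast; linear_combination hk - hlen, fun j hj => ?_⟩
    rcases Nat.lt_or_eq_of_le hj with hj | rfl
    · exact hmid j (by omega)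
    · exact ⟨_, .head hstep hgr, by push_cast; linear_combination hk - hlen⟩

theorem not_step_X_pow (ha : 2 ≤ a) (hn : 1 ≤ n) (f : ℕ[X]) (k : ℕ) :
    ¬ Step a b n f (X ^ k) := by
  rintro ⟨i, hi⟩
  have hcoeff := congrArg (coeff · i) hi
  simp only [coeff_add, coeff_X_pow, coeff_C_mul] at hcoeff
  split_ifs at hcoeff <;> omega

theorem eq_X_pow_of_reflTransGen (ha : 2 ≤ a) (hn : 1 ≤ n) {f : ℕ[X]} {k : ℕ}
    (h : Relation.ReflTransGen (Step a b n) f (X ^ k)) : f = X ^ k := by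
  rcases h.cases_tail with h | ⟨g, -, hstep⟩
  · exact h.symm
  · exact absurd hstep (not_step_X_pow ha hn g k)

theorem isReduced_X_pow (hb : 2 ≤ b) (k : ℕ) : IsReduced b n (X ^ k) := by
  intro i
  rw [coeff_X_pow]
  split_ifs <;> omega

theorem IsReduced.eq_of_aeval_eq {A : Type*} [CommRing A] [Algebra ℚ A] {α : A} {q : ℚ}
    (hn : n ≠ 0) (hmin : minpoly ℚ α = X ^ n - C q) {f g : ℕ[X]} (hf : IsReduced q.den n f)
    (hg : IsReduced q.den n g) (h : aeval α f = aeval α g) : f = g := by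
  set p := f.map (algebraMap ℕ ℤ) - g.map (algebraMap ℕ ℤ)
  have hp : aeval α p = 0 := by simp [p, aeval_map_algebraMap, h]
  refine map_injective (algebraMap ℕ ℤ) Nat.cast_injective (sub_eq_zero.mp ?_)
  refine eq_zero_of_dvd_of_abs_coeff_lt hn (C_den_mul_X_pow_sub_C_num_dvd hn hmin hp) fun i => ?_
  simp only [coeff_sub, coeff_map, eq_natCast]
  exact abs_sub_lt_of_nonneg_of_lt (by positivity) (Nat.cast_lt.mpr (hf i)) (by positivity)
    (Nat.cast_lt.mpr (hg i))

section Uniqueness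

variable {R : Type*} [CommRing R] {α : R}

theorem reflTransGen_of_aeval_eq (hb : 1 ≤ b) (hn : 1 ≤ n) (hα : (b : R) * α ^ n = a)
    (huniq : ∀ f g, IsReduced b n f → IsReduced b n g → aeval α f = aeval α g → f = g)
    {f r : ℕ[X]} (hr : IsReduced b n r) (h : aeval α f = aeval α r) :
    Relation.ReflTransGen (Step a b n) f r := by
  obtain ⟨r', hr', hfr'⟩ := exists_isReduced_reflTransGen (a := a) hb hn f
  rwa [huniq r' r hr' hr ((aeval_eq_of_reflTransGen hα hfr').trans h)] at hfr'

theorem isAddAtomIn_closure_range_pow_iff (ha : 2 ≤ a) (hb : 2 ≤ b) (hn : 1 ≤ n)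
    (hα : (b : R) * α ^ n = a)
    (huniq : ∀ f g, IsReduced b n f → IsReduced b n g → aeval α f = aeval α g → f = g) (u : R) :
    IsAddAtomIn (AddSubmonoid.closure (Set.range fun k : ℕ => α ^ k)) u ↔ ∃ k : ℕ, α ^ k = u := by
  have hpow : ∀ k, α ^ k ≠ 0 := fun k hk =>
    pow_ne_zero k X_ne_zero <| huniq _ 0 (isReduced_X_pow hb k) (fun i => by simp; omega)
      (by simp [hk])
  refine ⟨fun hu => IsAddAtomIn.mem_of_closure (S := Set.range (α ^ ·))
    (by rintro ⟨k, hk⟩; exact hpow k hk) hu, ?_⟩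
  rintro ⟨k, rfl⟩
  refine ⟨AddSubmonoid.subset_closure (Set.mem_range_self k), hpow k,
    fun u v hu hv hu0 hv0 heq => ?_⟩
  obtain ⟨f, rfl⟩ := mem_closure_range_pow_iff.mp hu
  obtain ⟨g, rfl⟩ := mem_closure_range_pow_iff.mp hv
  have hfg : f + g = X ^ k := eq_X_pow_of_reflTransGen ha hn <|
    reflTransGen_of_aeval_eq (by omega) hn hα huniq (isReduced_X_pow hb k) (by simp [heq])
  have hf := eval_one_ne_zero_of_ne_zero (f := f) (by rintro rfl; simp at hu0)
  have hg := eval_one_ne_zero_of_ne_zero (f := g) (by rintro rfl; simp at hv0)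
  have := congrArg (eval 1) hfg
  simp only [eval_add, eval_pow, eval_X, one_pow] at this
  omega

theorem isAPWith_setOf_eval_one (hb : 1 ≤ b) (hn : 1 ≤ n) (hα : (b : R) * α ^ n = a)
    (huniq : ∀ f g, IsReduced b n f → IsReduced b n g → aeval α f = aeval α g → f = g)
    (f : ℕ[X]) :
    IsAPWith {ℓ | ∃ g : ℕ[X], aeval α g = aeval α f ∧ g.eval 1 = ℓ} ((b : ℤ) - a).natAbs := by
  obtain ⟨r, hr, hfr⟩ := exists_isReduced_reflTransGen (a := a) hb hn f
  have hval : ∀ {g}, Relation.ReflTransGen (Step a b n) g r → aeval α g = aeval α f := fun h =>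
    (aeval_eq_of_reflTransGen hα h).symm.trans (aeval_eq_of_reflTransGen hα hfr)
  refine isAPWith_of_segment_closed (r.eval 1) ?_
  rintro _ ⟨g, hg, rfl⟩
  obtain ⟨k, hk, hmid⟩ := exists_lengths_of_reflTransGen <|
    reflTransGen_of_aeval_eq hb hn hα huniq hr (hg.trans (hval .refl).symm)
  refine ⟨k, hk, fun j hj => ?_⟩
  obtain ⟨g', hg'r, hg'⟩ := hmid j hj
  exact ⟨_, ⟨g', hval hg'r, rfl⟩, hg'⟩

end Uniqueness

end PowerMonoid

open PowerMonoid in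
/-- Let `q` be a non-integer positive rational that is not the reciprocal of an integer,
and `α` a positive irreducible `n`-th root of `q`. Then for every nonzero `b ∈ ℕ₀[α]`,
the set of lengths `L(b)` is an arithmetic progression with difference `|n(q) - d(q)|`. -/
theorem stmt_7 (q : ℚ) (hq : 0 < q)
    (hqint : ¬ ∃ m : ℤ, q = (m : ℚ)) (hqrec : ¬ ∃ m : ℤ, q⁻¹ = (m : ℚ))
    (n : ℕ) (hn : 1 ≤ n) (α : ℝ) (hαpos : 0 < α) (hroot : α ^ n = (q : ℝ))
    (hirr : ∀ i, 1 ≤ i → i < n → Irrational (α ^ i))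
    (M : AddSubmonoid ℝ)
    (hM : M = AddSubmonoid.closure (Set.range fun k : ℕ => α ^ k)) :
    ∀ b ∈ M, b ≠ 0 → IsAPWith (lengthsIn M b) (q.num - (q.den : ℤ)).natAbs := by
  subst hM
  intro β hβ _
  obtain ⟨a, ha⟩ : ∃ a : ℕ, (a : ℤ) = q.num := ⟨_, Int.toNat_of_nonneg (Rat.num_pos.mpr hq).le⟩
  have hα : (q.den : ℝ) * α ^ n = a := by
    rw [hroot, mul_comm]
    exact_mod_cast (Rat.mul_den_eq_num q).trans (congrArg Int.cast ha.symm)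
  have huniq := fun f g => IsReduced.eq_of_aeval_eq (f := f) (g := g) (by omega)
    (minpoly_eq_X_pow_sub_C (by omega) hαpos hroot hirr)
  have hatom := isAddAtomIn_closure_range_pow_iff (a := a)
    (by have := Rat.two_le_num hq hqrec; omega) (Rat.two_le_den hqint) hn hα huniq
  obtain ⟨f, rfl⟩ := mem_closure_range_pow_iff.mp hβ
  rw [lengthsIn_eq_of_isAddAtomIn_iff hatom,
    show (q.num - q.den).natAbs = ((q.den : ℤ) - a).natAbs by omega]
  exact isAPWith_setOf_eval_one q.den_pos hn hα huniq f
end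

section
/- Let α be the positive real root of m(X) = X⁴ − 6X³ + 4X² − 2X − 2. There is no polynomial q(X) ∈ ℕ₀[X] with q(1) = 12 such that q(X) − (X⁵ + 6X²) is divisible by m(X) in ℤ[X]. -/
open Polynomial

/-- There is no polynomial `q(X)` with nonnegative integer coefficients such that
`q(1) = 12` and `m(X) = X⁴ - 6X³ + 4X² - 2X - 2` divides `q(X) - (X⁵ + 6X²)` in `ℤ[X]`. -/
theorem stmt_10 :
    ¬ ∃ qp : Polynomial ℤ, (∀ i, 0 ≤ qp.coeff i) ∧ qp.eval 1 = 12 ∧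
      (X ^ 4 - 6 * X ^ 3 + 4 * X ^ 2 - 2 * X - 2 : Polynomial ℤ) ∣
        (qp - (X ^ 5 + 6 * X ^ 2)) := by
  rintro ⟨q, hpos, heval, h, hh⟩
  set m : Polynomial ℤ := X ^ 4 - 6 * X ^ 3 + 4 * X ^ 2 - 2 * X - 2 with hm_def
  set p : Polynomial ℤ := X ^ 5 + 6 * X ^ 2 with hp_def
  -- general coefficient formula for m * h
  have cmh : ∀ k : ℕ, (m * h).coeff k =
      (if 4 ≤ k then h.coeff (k-4) else 0) - 6*(if 3 ≤ k then h.coeff (k-3) else 0)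
      + 4*(if 2 ≤ k then h.coeff (k-2) else 0) - 2*(if 1 ≤ k then h.coeff (k-1) else 0)
      - 2*h.coeff k := by
    intro k
    have hm : m * h = h*X^4 - (6*h)*X^3 + (4*h)*X^2 - (2*h)*X^1 - 2*h := by
      rw [hm_def]; ring
    rw [hm]
    simp only [coeff_sub, coeff_add, coeff_mul_X_pow']
    have c6 : ∀ j, ((6:ℤ[X])*h).coeff j = 6 * h.coeff j := by intro j; simp
    have c4 : ∀ j, ((4:ℤ[X])*h).coeff j = 4 * h.coeff j := by intro j; simp
    have c2 : ∀ j, ((2:ℤ[X])*h).coeff j = 2 * h.coeff j := by intro j; simp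
    simp only [c6, c4, c2]
    split_ifs <;> ring
  have hq : ∀ k, q.coeff k = p.coeff k + (m*h).coeff k := by
    intro k
    have := congrArg (fun r : ℤ[X] => r.coeff k) hh
    simp only [coeff_sub] at this
    linarith
  -- p coefficients
  have hpc : ∀ k, p.coeff k = if k = 5 then 1 else (if k = 2 then 6 else 0) := by
    intro k
    rw [hp_def]
    simp [coeff_add, coeff_X_pow, coeff_ofNat_mul]
    split_ifs with h1 h2 <;> simp_all
  -- the main recursion, for indices ≥ 4
  have key : ∀ j : ℕ, h.coeff j = q.coeff (j+4) - p.coeff (j+4)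
      + 6 * h.coeff (j+1) - 4 * h.coeff (j+2) + 2 * h.coeff (j+3) + 2 * h.coeff (j+4) := by
    intro j
    have := hq (j+4)
    rw [cmh (j+4)] at this
    have e1 : j + 4 - 4 = j := by omega
    have e2 : j + 4 - 3 = j + 1 := by omega
    have e3 : j + 4 - 2 = j + 2 := by omega
    have e4 : j + 4 - 1 = j + 3 := by omega
    simp only [e1, e2, e3, e4, if_pos (by omega : 4 ≤ j+4), if_pos (by omega : 3 ≤ j+4),
      if_pos (by omega : 2 ≤ j+4), if_pos (by omega : 1 ≤ j+4)] at this
    linarith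
  have hq0 : q.coeff 0 = -2 * h.coeff 0 := by
    have := hq 0
    rw [cmh 0, hpc 0] at this
    simpa using this
  have h0le : h.coeff 0 ≤ 0 := by have := hpos 0; rw [hq0] at this; linarith
  -- h ≠ 0
  have hne : h ≠ 0 := by
    rintro rfl
    rw [mul_zero, sub_eq_zero] at hh
    rw [hh, hp_def] at heval
    simp at heval
  set n := h.natDegree with hn_def
  have hzero : ∀ k, n < k → h.coeff k = 0 := fun k hk => coeff_eq_zero_of_natDegree_lt hk
  have hlead : h.coeff n ≠ 0 := by
    rw [hn_def]; exact leadingCoeff_ne_zero.mpr hne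
  -- eval at 1 : h.eval 1 = -1
  have hev1 : h.eval 1 = -1 := by
    have := congrArg (fun r : ℤ[X] => r.eval 1) hh
    simp only [eval_sub, eval_mul, heval, hp_def, hm_def] at this
    simp at this
    linarith
  rcases Nat.lt_or_ge n 2 with hn2 | hn2
  · -- cases n = 0, n = 1
    interval_cases n
    · -- n = 0
      have h0 : h.coeff 0 = q.coeff 4 := by
        have := key 0
        rw [hzero 1 (by omega), hzero 2 (by omega), hzero 3 (by omega), hzero 4 (by omega),
          hpc 4] at this
        simpa using this
      have := hpos 4
      apply hlead
      omega
    · -- n = 1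
      have hsum : h.coeff 0 + h.coeff 1 = -1 := by
        have := hev1
        rw [eval_eq_sum_range] at this
        simp [Finset.sum_range_succ, ← hn_def] at this
        linarith
      have e5 : h.coeff 1 = q.coeff 5 - 1 := by
        have := key 1
        rw [hzero 2 (by omega), hzero 3 (by omega), hzero 4 (by omega), hzero 5 (by omega),
          hpc 5] at this
        simpa using this
      have e4 : h.coeff 0 = q.coeff 4 + 6 * h.coeff 1 := by
        have := key 0
        rw [hzero 2 (by omega), hzero 3 (by omega), hzero 4 (by omega), hpc 4] at this
        simpa using this
      have e3 : q.coeff 3 = 4 * h.coeff 1 - 6 * h.coeff 0 := by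
        have := hq 3
        rw [cmh 3, hpc 3, hzero 2 (by omega), hzero 3 (by omega)] at this
        simp only [if_neg (by omega : ¬ (4:ℕ) ≤ 3), if_pos (le_refl (3:ℕ)),
          if_pos (by omega : (2:ℕ) ≤ 3), if_pos (by omega : (1:ℕ) ≤ 3)] at this
        simp at this
        linarith
      have := hpos 5; have := hpos 4; have := hpos 3
      omega
  · -- n ≥ 2
    have hHn : 1 ≤ h.coeff n := by
      have h0 : h.coeff n = q.coeff (n+4) := by
        have := key n
        rw [hzero (n+1) (by omega), hzero (n+2) (by omega), hzero (n+3) (by omega),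
          hzero (n+4) (by omega), hpc (n+4)] at this
        have h5 : ¬ (n + 4 = 5) := by omega
        have h2' : ¬ (n + 4 = 2) := by omega
        rw [if_neg h5, if_neg h2'] at this
        linarith
      have := hpos (n+4)
      rcases hlead.lt_or_gt with hl | hl
      · omega
      · omega
    -- p.coeff bound for indices ≥ 5
    have hpcb : ∀ k, 5 ≤ k → 0 ≤ p.coeff k ∧ p.coeff k ≤ 1 := by
      intro k hk
      rw [hpc k]
      split_ifs <;> omega
    -- the downward induction
    have inv : ∀ d j : ℕ, 1 ≤ j → j + d = n - 1 →
        ((∀ k, j ≤ k → 0 ≤ h.coeff k) ∧ 5 * h.coeff (j+1) ≤ h.coeff j ∧ 5 ≤ h.coeff j) := by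
      intro d
      induction d with
      | zero =>
        intro j hj hjd
        have hjn : j = n - 1 := by omega
        have hj1 : j + 1 = n := by omega
        have hbase : h.coeff j = q.coeff (j+4) - p.coeff (j+4) + 6 * h.coeff n := by
          have := key j
          rw [hj1, hzero (j+2) (by omega), hzero (j+3) (by omega),
            hzero (j+4) (by omega)] at this
          linarith
        have hpb := hpcb (j+4) (by omega)
        have hq4 := hpos (j+4)
        refine ⟨?_, ?_, ?_⟩
        · intro k hk
          rcases Nat.lt_or_ge n k with hk2 | hk2
          · rw [hzero k hk2]
          · have : k = j ∨ k = n := by omega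
            rcases this with rfl | rfl
            · rw [hbase]; linarith
            · linarith
        · rw [hj1, hbase]; linarith
        · rw [hbase]; linarith
      | succ d ih =>
        intro j hj hjd
        have IH := ih (j+1) (by omega) (by omega)
        obtain ⟨IH1, IH2, IH3⟩ := IH
        have hpb := hpcb (j+4) (by omega)
        have hq4 := hpos (j+4)
        have hkey := key j
        have h3 := IH1 (j+3) (by omega)
        have h4 := IH1 (j+4) (by omega)
        have hj5 : 5 * h.coeff (j+1) ≤ h.coeff j := by nlinarith [key j]
        refine ⟨?_, hj5, by nlinarith⟩
        intro k hk
        rcases Nat.lt_or_ge k (j+1) with hk2 | hk2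
        · have : k = j := by omega
          subst this
          nlinarith
        · exact IH1 k hk2
    have hfin := inv (n - 2) 1 (le_refl 1) (by omega)
    obtain ⟨F1, F2, F3⟩ := hfin
    have e4 : h.coeff 0 = q.coeff 4 + 6 * h.coeff 1 - 4 * h.coeff 2
        + 2 * h.coeff 3 + 2 * h.coeff 4 := by
      have := key 0
      rw [hpc 4] at this
      simpa using this
    have := hpos 4
    have := F1 3 (by omega)
    have := F1 4 (by omega)
    nlinarith
end

section
/- Let α > 1 be a real root of p(X) = X⁴ − X³ − X² − X + 1. Then for every k ∈ ℕ, the identity α^{3k+1} + 1 = α^{3k} + α + Σ_{i=1}^{k} α^{3i−1} holds. -/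
/-! Multiplying `α⁴ + 1 = α³ + α² + α` by `α^{3k}` shows that passing from `k` to `k + 1` adds
`α^{3k+4} - α^{3k+1} = α^{3k+3} - α^{3k} + α^{3k+2}` to the left side, which is exactly what the
right side gains. -/

theorem pow_add_four_add_pow_of_root {R : Type*} [CommRing R] {α : R}
    (hroot : α ^ 4 - α ^ 3 - α ^ 2 - α + 1 = 0) (n : ℕ) :
    α ^ (n + 4) + α ^ n = α ^ (n + 3) + α ^ (n + 2) + α ^ (n + 1) := by
  linear_combination α ^ n * hroot

theorem pow_three_mul_add_one_add_one_of_root {R : Type*} [CommRing R] {α : R}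
    (hroot : α ^ 4 - α ^ 3 - α ^ 2 - α + 1 = 0) (k : ℕ) :
    α ^ (3 * k + 1) + 1 = α ^ (3 * k) + α + ∑ i ∈ Finset.Icc 1 k, α ^ (3 * i - 1) := by
  induction k with
  | zero => simp [add_comm]
  | succ k ih =>
    rw [Finset.sum_Icc_succ_top (by omega), show 3 * (k + 1) - 1 = 3 * k + 2 by omega]
    linear_combination ih + pow_add_four_add_pow_of_root hroot (3 * k)

theorem stmt_12_general (α : ℝ)
    (hroot : α ^ 4 - α ^ 3 - α ^ 2 - α + 1 = 0) (k : ℕ) :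
    α ^ (3 * k + 1) + 1 = α ^ (3 * k) + α + ∑ i ∈ Finset.Icc 1 k, α ^ (3 * i - 1) :=
  pow_three_mul_add_one_add_one_of_root hroot k

/-- If `α > 1` is a root of `X⁴ - X³ - X² - X + 1`, then for every `k ≥ 1`,
`α^{3k+1} + 1 = α^{3k} + α + ∑_{i=1}^{k} α^{3i-1}`. -/
theorem stmt_12 (α : ℝ) (hα : 1 < α)
    (hroot : α ^ 4 - α ^ 3 - α ^ 2 - α + 1 = 0) (k : ℕ) (hk : 1 ≤ k) :
    α ^ (3 * k + 1) + 1 = α ^ (3 * k) + α + ∑ i ∈ Finset.Icc 1 k, α ^ (3 * i - 1) :=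
  stmt_12_general α hroot k
end

section
/- Let α > 1 be the real root of p(X) = X⁴ − X³ − X² − X + 1 with α > 1, and suppose ℕ₀[α] is atomic with atoms {α^n : n ∈ ℕ₀}. Then ℕ₀[α] does not satisfy the structure property for sets of lengths: there do not exist d ∈ ℕ and N ∈ ℕ₀ such that the set of lengths of every element of ℕ₀[α] is an almost arithmetic progression with difference d and bound N. -/
/-- `S` is an almost arithmetic progression (AAP) with difference `d` and bound `N`:
`S = c + (S' ∪ S* ∪ S'') ⊆ c + dℤ`, where `S*` is a nonempty arithmetic progression with
difference `d` and `min S* = 0`, `S' ⊆ {-N, …, -1}`, and `S'' ⊆ sup S* + {1, …, N}`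
(`S''` empty when `S*` is infinite). -/
def IsAAP (S : Set ℤ) (d : ℕ) (N : ℕ) : Prop :=
  ∃ (c : ℤ) (S' S'' : Set ℤ) (m : ℕ∞), 0 < m ∧
    S' ⊆ Set.Icc (-(N : ℤ)) (-1) ∧
    (m = ⊤ → S'' = ∅) ∧
    (∀ j : ℕ, m = (j : ℕ∞) →
      S'' ⊆ Set.Icc ((d : ℤ) * ((j : ℤ) - 1) + 1) ((d : ℤ) * ((j : ℤ) - 1) + (N : ℤ))) ∧
    (∀ x ∈ S' ∪ {y : ℤ | ∃ k : ℕ, (k : ℕ∞) < m ∧ y = (d : ℤ) * k} ∪ S'', (d : ℤ) ∣ x) ∧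
    S = (c + ·) '' (S' ∪ {y : ℤ | ∃ k : ℕ, (k : ℕ∞) < m ∧ y = (d : ℤ) * k} ∪ S'')

open Polynomial Filter Topology
open scoped Pointwise

theorem aeval_multiset_sum_X_pow {F A : Type*} [CommSemiring F] [CommSemiring A] [Algebra F A]
    (x : A) (e : Multiset ℕ) :
    aeval x (e.map (X ^ · : ℕ → F[X])).sum = (e.map (x ^ ·)).sum := by
  simp [map_multiset_sum, Multiset.map_map]

theorem sum_map_pow_eq_of_aeval_minpoly {F A : Type*} [Field F] [CommRing A] [Algebra F A]
    {x y : A} (hy : aeval y (minpoly F x) = 0) {e e' : Multiset ℕ}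
    (h : (e.map (x ^ ·)).sum = (e'.map (x ^ ·)).sum) :
    (e.map (y ^ ·)).sum = (e'.map (y ^ ·)).sum := by
  set f : F[X] := (e.map (X ^ ·)).sum - (e'.map (X ^ ·)).sum
  have hf (z : A) : aeval z f = (e.map (z ^ ·)).sum - (e'.map (z ^ ·)).sum := by
    simp only [f, map_sub, aeval_multiset_sum_X_pow]
  have := aeval_eq_zero_of_dvd_aeval_eq_zero (minpoly.dvd F x (by rw [hf, h, sub_self])) hy
  rwa [hf, sub_eq_zero] at this

theorem IsCompact.nsmul_set {M : Type*} [AddMonoid M] [TopologicalSpace M] [ContinuousAdd M]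
    {K : Set M} (hK : IsCompact K) (n : ℕ) : IsCompact (n • K) := by
  induction n with
  | zero => simp
  | succ n ih => rw [succ_nsmul]; exact ih.add hK

theorem Set.multiset_sum_mem_nsmul {M : Type*} [AddCommMonoid M] {K : Set M} (h0 : 0 ∈ K)
    {m : Multiset M} (hm : ∀ x ∈ m, x ∈ K) {n : ℕ} (hn : Multiset.card m ≤ n) :
    m.sum ∈ n • K := by
  induction m using Multiset.induction_on generalizing n with
  | empty => exact Set.zero_mem_nsmul h0
  | cons a m ih =>
    obtain ⟨n, rfl⟩ : ∃ n', n = n' + 1 := ⟨n - 1, by simp at hn; omega⟩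
    rw [Multiset.sum_cons, succ_nsmul']
    exact Set.add_mem_add (hm a (Multiset.mem_cons_self a m))
      (ih (fun x hx => hm x (Multiset.mem_cons_of_mem hx)) (by simpa using hn))

theorem mem_nsmul_insert_zero_range_pow_succ_iff {R : Type*} [CommSemiring R] {γ s : R} {n : ℕ} :
    s ∈ n • insert 0 (Set.range fun a : ℕ ↦ γ ^ (a + 1)) ↔
      ∃ e : Multiset ℕ, 0 ∉ e ∧ Multiset.card e ≤ n ∧ (e.map (γ ^ ·)).sum = s := by
  constructor
  · induction n generalizing s with
    | zero => exact fun hs ↦ ⟨0, by simp, le_rfl, by simpa [eq_comm] using hs⟩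
    | succ n ih =>
      rw [succ_nsmul]
      rintro ⟨t, ht, u, hu, rfl⟩
      obtain ⟨e, he0, hen, rfl⟩ := ih ht
      rcases hu with rfl | ⟨a, rfl⟩
      · exact ⟨e, he0, by omega, (add_zero _).symm⟩
      · exact ⟨(a + 1) ::ₘ e, by simp [he0], by simpa using hen, by simp [add_comm]⟩
  · rintro ⟨e, he0, hen, rfl⟩
    refine Set.multiset_sum_mem_nsmul (Set.mem_insert _ _) ?_ (by simpa using hen)
    simp only [Multiset.mem_map]
    rintro _ ⟨a, ha, rfl⟩
    obtain ⟨b, rfl⟩ :=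
      Nat.exists_eq_add_one.2 (Nat.pos_of_ne_zero (ne_of_mem_of_not_mem ha he0))
    exact Or.inr ⟨b, rfl⟩

theorem pow_le_sum_map_pow {x : ℝ} (hx : 0 ≤ x) {e : Multiset ℕ} {a : ℕ} (ha : a ∈ e) :
    x ^ a ≤ (e.map (x ^ ·)).sum :=
  Multiset.single_le_sum (by simp only [Multiset.mem_map]; rintro _ ⟨b, -, rfl⟩; positivity) _
    (Multiset.mem_map_of_mem _ ha)

theorem sum_map_pow_ne_one {α : ℝ} (hα : 1 < α) {e : Multiset ℕ} (he : 0 ∉ e) :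
    (e.map (α ^ ·)).sum ≠ 1 := by
  intro h
  rcases Multiset.empty_or_exists_mem e with rfl | ⟨a, ha⟩
  · simp at h
  · have hle : α ^ a ≤ 1 := h ▸ pow_le_sum_map_pow (by linarith) ha
    have hlt : 1 < α ^ a := one_lt_pow₀ hα (ne_of_mem_of_not_mem ha he)
    linarith

theorem card_eq_one_of_sum_map_pow_eq {α : ℝ} (hα : 1 < α) {e : Multiset ℕ} {n : ℕ}
    (h : (e.map (α ^ ·)).sum = α ^ n) (h' : (e.map (α⁻¹ ^ ·)).sum = α⁻¹ ^ n) :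
    Multiset.card e = 1 := by
  have hα0 : 0 < α := by linarith
  have he : e = Multiset.replicate (Multiset.card e) n := Multiset.eq_replicate_of_mem fun a ha =>
    le_antisymm ((pow_le_pow_iff_right₀ hα).1 (h ▸ pow_le_sum_map_pow hα0.le ha))
      ((pow_le_pow_iff_right_of_lt_one₀ (inv_pos.2 hα0) (inv_lt_one_of_one_lt₀ hα)).1
        (h' ▸ pow_le_sum_map_pow (inv_pos.2 hα0).le ha))
  rw [he, Multiset.map_replicate, Multiset.sum_replicate, nsmul_eq_mul] at h
  exact_mod_cast mul_right_cancel₀ (pow_ne_zero n hα0.ne') (h.trans (one_mul _).symm)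

theorem not_isAAP_of_isolated {S : Set ℤ} {d N : ℕ} {a : ℤ} (hd : 0 < d) (ha : a ∈ S)
    (hgap : ∀ z ∈ S, z = a ∨ a + N + d < z) (hne : ∃ z ∈ S, z ≠ a) :
    ¬ IsAAP S d N := by
  rintro ⟨c, S', S'', m, hm0, hS', htop, hS'', -, rfl⟩
  set T := S' ∪ {y : ℤ | ∃ k : ℕ, (k : ℕ∞) < m ∧ y = d * k} ∪ S''
  have hlow : ∀ s ∈ T, -(N : ℤ) ≤ s := by
    rintro s ((hs | ⟨k, -, rfl⟩) | hs)
    · exact (hS' hs).1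
    · have : (0 : ℤ) ≤ d * k := by positivity
      omega
    · induction m using ENat.recTopCoe with
      | top => simp [htop rfl] at hs
      | coe j =>
        have hj : 1 ≤ j := by exact_mod_cast Order.one_le_iff_pos.2 hm0
        have := (hS'' j rfl hs).1
        have : (0 : ℤ) ≤ d * ((j : ℤ) - 1) := mul_nonneg (by positivity) (by omega)
        omega
  have hc : c ∈ (c + ·) '' T := ⟨0, Or.inl (Or.inr ⟨0, hm0, by simp⟩), add_zero c⟩
  rcases hgap c hc with rfl | hc
  · by_cases hm1 : 1 < m
    · have hcd : c + d ∈ (c + ·) '' T :=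
        ⟨d, Or.inl (Or.inr ⟨1, by exact_mod_cast hm1, by simp⟩), rfl⟩
      rcases hgap _ hcd with h | h <;> omega
    · have hm : m = 1 := le_antisymm (not_lt.1 hm1) (Order.one_le_iff_pos.2 hm0)
      obtain ⟨_, ⟨s, hs, rfl⟩, hsc⟩ := hne
      have hsN : s ≤ N := by
        rcases hs with (hs | ⟨k, hk, rfl⟩) | hs
        · linarith [(hS' hs).2]
        · have : k = 0 := by simpa [hm] using hk
          simp [this]
        · simpa using (hS'' 1 (by simp [hm]) hs).2
      dsimp only at hsc
      rcases hgap (c + s) ⟨s, hs, rfl⟩ with h | h <;> omega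
  · obtain ⟨s, hs, hsa⟩ := ha
    have := hlow s hs
    dsimp only at hsa
    omega

theorem mem_lengthsIn_iff {R ι : Type*} [AddCommMonoid R] {S : AddSubmonoid R} {f : ι → R}
    (hatoms : ∀ a, IsAddAtomIn S a ↔ ∃ i, a = f i) {x : R} {ℓ : ℕ} :
    ℓ ∈ lengthsIn S x ↔ ∃ e : Multiset ι, Multiset.card e = ℓ ∧ (e.map f).sum = x := by
  constructor
  · rintro ⟨l, hl, rfl, rfl⟩
    obtain ⟨e, rfl⟩ : ∃ e : Multiset ι, e.map f = l := by
      induction l using Multiset.induction_on with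
      | empty => exact ⟨0, rfl⟩
      | cons a l ih =>
        obtain ⟨i, rfl⟩ := (hatoms a).1 (hl a (Multiset.mem_cons_self a l))
        obtain ⟨e, rfl⟩ := ih fun b hb ↦ hl b (Multiset.mem_cons_of_mem hb)
        exact ⟨i ::ₘ e, Multiset.map_cons f i e⟩
    exact ⟨e, (Multiset.card_map f e).symm, rfl⟩
  · rintro ⟨e, rfl, rfl⟩
    refine ⟨e.map f, ?_, rfl, (Multiset.card_map f e)⟩
    simp only [Multiset.mem_map]
    rintro _ ⟨i, -, rfl⟩
    exact (hatoms _).2 ⟨i, rfl⟩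

noncomputable def salemQuartic (R : Type*) [CommRing R] : R[X] :=
  X ^ 4 - X ^ 3 - X ^ 2 - X + 1

namespace salemQuartic

variable {R S : Type*} [CommRing R] [CommRing S]

theorem monic : (salemQuartic R).Monic := by
  unfold salemQuartic; monicity!

@[simp]
theorem map (f : R →+* S) : (salemQuartic R).map f = salemQuartic S := by
  simp [salemQuartic]

@[simp]
theorem aeval_eq [Algebra R S] (x : S) :
    aeval x (salemQuartic R) = x ^ 4 - x ^ 3 - x ^ 2 - x + 1 := by
  simp [salemQuartic]

theorem zmod_two_eq_cyclotomic : salemQuartic (ZMod 2) = cyclotomic 5 (ZMod 2) := by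
  have : Fact (Nat.Prime 5) := ⟨by norm_num⟩
  rw [cyclotomic_prime, salemQuartic]
  simp only [Finset.sum_range_succ, Finset.sum_range_zero, CharTwo.sub_eq_add]
  ring

theorem irreducible_zmod_two : Irreducible (salemQuartic (ZMod 2)) := by
  rw [zmod_two_eq_cyclotomic]
  refine ZMod.irreducible_of_dvd_cyclotomic_of_natDegree (p := 2) (by norm_num) dvd_rfl ?_
  rw [natDegree_cyclotomic, Nat.totient_prime (by norm_num), eq_comm, orderOf_eq_iff (by decide)]
  exact ⟨by decide +revert, by decide +revert⟩

theorem irreducible_rat : Irreducible (salemQuartic ℚ) := by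
  have hℤ : Irreducible (salemQuartic ℤ) :=
    monic.irreducible_of_irreducible_map (Int.castRingHom (ZMod 2)) _
      (by rw [map]; exact irreducible_zmod_two)
  simpa using (IsPrimitive.Int.irreducible_iff_irreducible_map_cast monic.isPrimitive).mp hℤ

theorem minpoly_eq {K : Type*} [Field K] [CharZero K] {x : K}
    (hx : x ^ 4 - x ^ 3 - x ^ 2 - x + 1 = 0) : minpoly ℚ x = salemQuartic ℚ :=
  (minpoly.eq_of_irreducible_of_monic irreducible_rat (by simpa using hx) monic).symm

theorem inv_root {K : Type*} [Field K] {x : K} (hx : x ^ 4 - x ^ 3 - x ^ 2 - x + 1 = 0) :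
    x⁻¹ ^ 4 - x⁻¹ ^ 3 - x⁻¹ ^ 2 - x⁻¹ + 1 = 0 := by
  have hx0 : x ≠ 0 := by rintro rfl; norm_num at hx
  field_simp
  linear_combination hx

theorem sum_map_inv_pow_eq_iff {K : Type*} [Field K] [CharZero K] {x : K}
    (hx : x ^ 4 - x ^ 3 - x ^ 2 - x + 1 = 0) {e e' : Multiset ℕ} :
    (e.map (x⁻¹ ^ ·)).sum = (e'.map (x⁻¹ ^ ·)).sum ↔
      (e.map (x ^ ·)).sum = (e'.map (x ^ ·)).sum := by
  have hx' := inv_root hx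
  constructor <;> apply sum_map_pow_eq_of_aeval_minpoly (F := ℚ)
  · simpa [minpoly_eq hx'] using hx
  · simpa [minpoly_eq hx] using hx'

theorem pow_three_mul_add_one_add_one {x : R}
    (hx : x ^ 4 - x ^ 3 - x ^ 2 - x + 1 = 0) (k : ℕ) :
    x ^ (3 * k + 1) + 1 = x ^ (3 * k) + x + ∑ i ∈ Finset.range k, x ^ (3 * i + 2) := by
  induction k with
  | zero => simp [add_comm]
  | succ k ih =>
    rw [Finset.sum_range_succ]
    linear_combination ih + x ^ (3 * k) * hx

theorem one_notMem_nsmul_insert_zero_range_inv_pow_succ {α : ℝ} (hα : 1 < α)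
    (hroot : α ^ 4 - α ^ 3 - α ^ 2 - α + 1 = 0) (n : ℕ) :
    (1 : ℝ) ∉ n • insert 0 (Set.range fun a : ℕ ↦ α⁻¹ ^ (a + 1)) := by
  rw [mem_nsmul_insert_zero_range_pow_succ_iff]
  rintro ⟨e, he0, -, he⟩
  refine sum_map_pow_ne_one hα he0 ?_
  simpa using (sum_map_inv_pow_eq_iff hroot (e' := {0})).1 (by simpa using he)

theorem eventually_card_eq_two_or_lt {α : ℝ} (hα : 1 < α)
    (hroot : α ^ 4 - α ^ 3 - α ^ 2 - α + 1 = 0) (B : ℕ) :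
    ∀ᶠ n in atTop, ∀ e : Multiset ℕ, (e.map (α ^ ·)).sum = α ^ n + 1 →
      Multiset.card e = 2 ∨ B < Multiset.card e := by
  have hlim := tendsto_pow_atTop_nhds_zero_of_lt_one (inv_pos.2 (by linarith)).le
    (inv_lt_one_of_one_lt₀ hα)
  have hK : IsCompact (insert 0 (Set.range fun a : ℕ ↦ α⁻¹ ^ (a + 1))) :=
    (hlim.comp (tendsto_add_atTop_nat 1)).isCompact_insert_range
  have hfar := (hK.nsmul_set B).isClosed.isOpen_compl.mem_nhds
    (one_notMem_nsmul_insert_zero_range_inv_pow_succ hα hroot B)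
  have hlim' : Tendsto (α⁻¹ ^ · + 1) atTop (𝓝 (1 : ℝ)) := by simpa using hlim.add_const 1
  filter_upwards [hlim'.eventually hfar] with n hn e he
  have he' : (e.map (α⁻¹ ^ ·)).sum = α⁻¹ ^ n + 1 := by
    simpa using (sum_map_inv_pow_eq_iff hroot (e' := {n, 0})).2 (by simpa using he)
  by_cases h0 : 0 ∈ e
  · obtain ⟨e₁, rfl⟩ := Multiset.exists_cons_of_mem h0
    simp only [Multiset.map_cons, Multiset.sum_cons, pow_zero] at he he'
    left
    rw [Multiset.card_cons, card_eq_one_of_sum_map_pow_eq hα (by linarith) (by linarith)]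
  · right
    by_contra hB
    exact hn (mem_nsmul_insert_zero_range_pow_succ_iff.2 ⟨e, h0, not_lt.1 hB, he'⟩)

end salemQuartic

theorem stmt_13_general (α : ℝ) (hα : 1 < α)
    (hroot : α ^ 4 - α ^ 3 - α ^ 2 - α + 1 = 0)
    (M : AddSubmonoid ℝ)
    (hatoms : ∀ a, IsAddAtomIn M a ↔ ∃ k : ℕ, a = α ^ k) :
    ¬ ∃ (d : ℕ) (N : ℕ), 0 < d ∧
      ∀ x ∈ M, x ≠ 0 → IsAAP ((fun ℓ : ℕ => (ℓ : ℤ)) '' lengthsIn M x) d N := by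
  rintro ⟨d, N, hd, hAAP⟩
  obtain ⟨n₀, hn₀⟩ :=
    (salemQuartic.eventually_card_eq_two_or_lt hα hroot (N + d + 2)).exists_forall_of_atTop
  set k := n₀ + 1
  have hpow (i : ℕ) : α ^ i ∈ M := ((hatoms _).2 ⟨i, rfl⟩).1
  have hy : α ^ (3 * k + 1) + 1 ∈ M := M.add_mem (hpow _) (by simpa using hpow 0)
  refine not_isAAP_of_isolated (a := 2) hd ?_ ?_ ?_ (hAAP _ hy (by positivity))
  · exact ⟨2, (mem_lengthsIn_iff hatoms).2 ⟨{3 * k + 1, 0}, rfl, by simp⟩, rfl⟩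
  · rintro _ ⟨ℓ, hℓ, rfl⟩
    obtain ⟨e, rfl, he⟩ := (mem_lengthsIn_iff hatoms).1 hℓ
    rcases hn₀ (3 * k + 1) (by omega) e he with h | h
    · left; simp [h]
    · right; push_cast; omega
  · have hlen : k + 2 ∈ lengthsIn M (α ^ (3 * k + 1) + 1) :=
      (mem_lengthsIn_iff hatoms).2 ⟨3 * k ::ₘ 1 ::ₘ (Multiset.range k).map (3 * · + 2),
        by simp,
        by simp [salemQuartic.pow_three_mul_add_one_add_one hroot, Finset.sum, add_assoc]⟩
    exact ⟨(k + 2 : ℕ), ⟨k + 2, hlen, rfl⟩, by omega⟩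

/-- Let `α > 1` be the real root of `X⁴ - X³ - X² - X + 1` exceeding `1`, with `ℕ₀[α]`
atomic with atoms `{α^n}`. Then `ℕ₀[α]` does not satisfy the structure property for sets
of lengths: there are no `d ∈ ℕ` and `N ∈ ℕ₀` such that every set of lengths of a nonzero
element is an AAP with difference `d` and bound `N`. -/
theorem stmt_13 (α : ℝ) (hα : 1 < α)
    (hroot : α ^ 4 - α ^ 3 - α ^ 2 - α + 1 = 0)
    (M : AddSubmonoid ℝ)
    (hM : M = AddSubmonoid.closure (Set.range fun k : ℕ => α ^ k))
    (hatoms : ∀ a, IsAddAtomIn M a ↔ ∃ k : ℕ, a = α ^ k)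
    (hatomic : ∀ x ∈ M, x ≠ 0 → ∃ l : Multiset ℝ, (∀ a ∈ l, IsAddAtomIn M a) ∧ l.sum = x) :
    ¬ ∃ (d : ℕ) (N : ℕ), 0 < d ∧
      ∀ x ∈ M, x ≠ 0 → IsAAP ((fun ℓ : ℕ => (ℓ : ℤ)) '' lengthsIn M x) d N :=
  stmt_13_general α hα hroot M hatoms
end

section
/- Let q be a non-integer positive rational with ℕ₀[q] atomic, written q = n/d in lowest terms. If an element of ℕ₀[q] has more than one factorization into atoms, then every factorization of that element has length at least min(d, n). -/
open Finset

lemma core_bound (q : ℚ) (n d : ℕ) (hn : 0 < n) (hd : 0 < d) (hcop : Nat.Coprime n d)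
    (hqnd : (d : ℚ) * q = n) (N : ℕ) (c c' : ℕ → ℕ)
    (hcN : ∀ k, N ≤ k → c k = 0) (hc'N : ∀ k, N ≤ k → c' k = 0)
    (hsum : ∑ k ∈ Finset.range N, (c k : ℚ) * q ^ k = ∑ k ∈ Finset.range N, (c' k : ℚ) * q ^ k)
    (hne : c ≠ c') :
    min d n ≤ ∑ k ∈ Finset.range N, c' k := by
  set u : ℕ → ℤ := fun k => (c k : ℤ) - c' k with hu_def
  have hu0 : ∃ k, u k ≠ 0 := by
    by_contra h
    push_neg at h
    exact hne (funext fun k => by have := h k; simp [hu_def] at this; omega)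
  have huN : ∀ k, N ≤ k → u k = 0 := fun k hk => by
    simp [hu_def, hcN k hk, hc'N k hk]
  have hN : 1 ≤ N := by
    by_contra h
    obtain ⟨k, hk⟩ := hu0
    exact hk (huN k (by omega))
  -- the rational relation
  have hQ : ∑ k ∈ range N, (u k : ℚ) * q ^ k = 0 := by
    have : ∑ k ∈ range N, ((c k : ℚ) - c' k) * q ^ k = 0 := by
      simp only [sub_mul, Finset.sum_sub_distrib, hsum, sub_self]
    simpa [hu_def] using this
  -- the integer relation
  have hZ' : ∑ k ∈ range N, ((u k : ℚ) * (n:ℚ) ^ k * (d:ℚ) ^ (N - 1 - k)) = 0 := by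
    calc ∑ k ∈ range N, ((u k : ℚ) * (n:ℚ) ^ k * (d:ℚ) ^ (N - 1 - k))
        = ∑ k ∈ range N, ((u k : ℚ) * q ^ k) * (d:ℚ) ^ (N - 1) := by
          refine Finset.sum_congr rfl fun k hk => ?_
          have hk' : k < N := mem_range.mp hk
          have h1 : (d:ℚ) ^ (N - 1) = d ^ k * d ^ (N - 1 - k) := by
            rw [← pow_add]; congr 1; omega
          have h2 : (d:ℚ) ^ k * q ^ k = (n:ℚ) ^ k := by rw [← mul_pow, hqnd]
          rw [h1, ← h2]; ring
      _ = (∑ k ∈ range N, (u k : ℚ) * q ^ k) * (d:ℚ) ^ (N - 1) := by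
          rw [Finset.sum_mul]
      _ = 0 := by rw [hQ, zero_mul]
  have hZ : ∑ k ∈ range N, (u k * (n:ℤ) ^ k * (d:ℤ) ^ (N - 1 - k)) = 0 := by
    exact_mod_cast hZ'
  set A : ℕ → ℤ := fun k => ∑ i ∈ range (k+1), u i * (n:ℤ) ^ i * (d:ℤ) ^ (k - i) with hA_def
  have hA_top : A (N - 1) = 0 := by
    have h : N - 1 + 1 = N := by omega
    simp only [hA_def, h]
    exact hZ
  have hA_rec : ∀ k, A (k+1) = A k * d + u (k+1) * (n:ℤ) ^ (k+1) := by
    intro k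
    simp only [hA_def]
    rw [Finset.sum_range_succ]
    have h0 : (k + 1) - (k+1) = 0 := by omega
    rw [h0, pow_zero, mul_one, Finset.sum_mul]
    congr 1
    refine Finset.sum_congr rfl fun i hi => ?_
    have hi' : i < k + 1 := mem_range.mp hi
    have : (k + 1) - i = (k - i) + 1 := by omega
    rw [this, pow_succ]; ring
  have hA_zero : ∀ k, N - 1 ≤ k → A k = 0 := by
    intro k hk
    induction k, hk using Nat.le_induction with
    | base => exact hA_top
    | succ m hm ih =>
      rw [hA_rec m, ih, huN (m+1) (by omega)]; ring
  have hA_sum : ∀ k m, k ≤ m → A m = A k * (d:ℤ) ^ (m - k)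
      + ∑ i ∈ Finset.Ico (k+1) (m+1), u i * (n:ℤ) ^ i * (d:ℤ) ^ (m - i) := by
    intro k m hkm
    induction m, hkm using Nat.le_induction with
    | base => simp
    | succ m hm ih =>
      rw [hA_rec m, ih]
      rw [Finset.sum_Ico_succ_top (by omega) (fun i => u i * (n:ℤ) ^ i * (d:ℤ) ^ (m + 1 - i))]
      have h1 : (m + 1) - k = (m - k) + 1 := by omega
      have h2 : (m + 1) - (m + 1) = 0 := by omega
      rw [h1, h2, pow_succ, pow_zero, mul_one]
      have h3 : ∑ i ∈ Finset.Ico (k+1) (m+1), u i * (n:ℤ) ^ i * (d:ℤ) ^ (m + 1 - i)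
          = (∑ i ∈ Finset.Ico (k+1) (m+1), u i * (n:ℤ) ^ i * (d:ℤ) ^ (m - i)) * d := by
        rw [Finset.sum_mul]
        refine Finset.sum_congr rfl fun i hi => ?_
        obtain ⟨hi1, hi2⟩ := Finset.mem_Ico.mp hi
        have : (m + 1) - i = (m - i) + 1 := by omega
        rw [this, pow_succ]; ring
      rw [h3]; ring
  have hA_div : ∀ k, (n:ℤ) ^ (k+1) ∣ A k := by
    intro k
    by_cases hk : N - 1 ≤ k
    · rw [hA_zero k hk]; exact dvd_zero _
    · push_neg at hk
      have h := hA_sum k (N-1) (by omega)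
      rw [hA_top] at h
      have hdvdS : (n:ℤ) ^ (k+1) ∣ ∑ i ∈ Finset.Ico (k+1) (N-1+1), u i * (n:ℤ) ^ i * (d:ℤ) ^ (N - 1 - i) := by
        refine Finset.dvd_sum fun i hi => ?_
        obtain ⟨hi1, _⟩ := Finset.mem_Ico.mp hi
        have : (n:ℤ) ^ i = (n:ℤ) ^ (k+1) * (n:ℤ) ^ (i - (k+1)) := by
          rw [← pow_add]; congr 1; omega
        rw [this]
        exact ⟨u i * (n:ℤ) ^ (i - (k+1)) * (d:ℤ) ^ (N - 1 - i), by ring⟩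
      have hdvd : (n:ℤ) ^ (k+1) ∣ A k * (d:ℤ) ^ (N - 1 - k) := by
        have : A k * (d:ℤ) ^ (N - 1 - k)
            = -∑ i ∈ Finset.Ico (k+1) (N-1+1), u i * (n:ℤ) ^ i * (d:ℤ) ^ (N - 1 - i) := by
          linarith [h]
        rw [this]
        exact dvd_neg.mpr hdvdS
      have hcp : IsCoprime ((n:ℤ) ^ (k+1)) ((d:ℤ) ^ (N - 1 - k)) :=
        (Nat.isCoprime_iff_coprime.mpr hcop).pow
      exact hcp.dvd_of_dvd_mul_right hdvd
  set r : ℕ → ℤ := fun k => -(A k / (n:ℤ) ^ (k+1)) with hr_def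
  have hnz : ∀ k : ℕ, ((n:ℤ)) ^ k ≠ 0 := fun k => pow_ne_zero _ (by exact_mod_cast hn.ne')
  have hr : ∀ k, (n:ℤ) ^ (k+1) * r k = -A k := by
    intro k
    simp only [hr_def, mul_neg]
    rw [Int.mul_ediv_cancel' (hA_div k)]
  have hr0 : (n:ℤ) * r 0 = -u 0 := by
    have := hr 0
    simp only [hA_def] at this
    rw [Finset.sum_range_one] at this
    simpa using this
  have hrrec : ∀ k, u (k+1) = r k * d - n * r (k+1) := by
    intro k
    have hpc : (n:ℤ) ^ (k+1) ≠ 0 := hnz (k+1)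
    apply mul_left_cancel₀ hpc
    have h1 := hr k
    have h2 := hr (k+1)
    rw [pow_succ] at h2
    have hrec := hA_rec k
    linear_combination -hrec - (d:ℤ) * h1 + h2
  have hrN : ∀ k, N - 1 ≤ k → r k = 0 := by
    intro k hk
    have := hr k
    rw [hA_zero k hk, neg_zero] at this
    exact (mul_eq_zero.mp this).resolve_left (hnz (k+1))
  have hrne : ∃ k, r k ≠ 0 := by
    by_contra h
    push_neg at h
    obtain ⟨k, hk⟩ := hu0
    apply hk
    cases k with
    | zero => have := hr0; rw [h 0, mul_zero] at this; omega
    | succ m => rw [hrrec m, h m, h (m+1)]; ring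
  -- key coefficient bound
  have hkey : ∀ k, -u k ≤ (c' k : ℤ) := by
    intro k
    have h1 : (0:ℤ) ≤ (c k : ℤ) := Int.natCast_nonneg _
    simp only [hu_def]; linarith
  suffices hsuf : ∃ i, i < N ∧ ((min d n : ℕ) : ℤ) ≤ (c' i : ℤ) by
    obtain ⟨i, hiN, hi⟩ := hsuf
    have h1 : min d n ≤ c' i := by exact_mod_cast hi
    calc min d n ≤ c' i := h1
      _ ≤ ∑ k ∈ range N, c' k :=
        Finset.single_le_sum (fun _ _ => Nat.zero_le _) (mem_range.mpr hiN)
  have hdZ : (1:ℤ) ≤ (d:ℤ) := by exact_mod_cast hd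
  have hnZ : (1:ℤ) ≤ (n:ℤ) := by exact_mod_cast hn
  obtain ⟨k1, hk1⟩ := hrne
  have hk1N : k1 ≤ N := by
    by_contra h
    exact hk1 (hrN k1 (by omega))
  set k0 := Nat.findGreatest (fun k => r k ≠ 0) N with hk0_def
  have hk0 : r k0 ≠ 0 := Nat.findGreatest_spec (P := fun k => r k ≠ 0) hk1N hk1
  have hk0N : k0 < N - 1 := by
    by_contra h
    exact hk0 (hrN k0 (by omega))
  rcases lt_or_gt_of_ne hk0 with hneg | hpos
  · -- r k0 < 0 : take i = k0 + 1, get bound d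
    refine ⟨k0 + 1, by omega, ?_⟩
    have hr1 : r (k0 + 1) = 0 := by
      by_contra h
      exact Nat.findGreatest_is_greatest (P := fun k => r k ≠ 0) (n := N) (by omega) (by omega) h
    have hu1 : u (k0 + 1) = r k0 * d := by
      rw [hrrec k0, hr1]; ring
    have : (d:ℤ) ≤ -u (k0+1) := by
      rw [hu1]
      have : r k0 ≤ -1 := by omega
      nlinarith
    have hmin : ((min d n : ℕ) : ℤ) ≤ (d:ℤ) := by exact_mod_cast Nat.min_le_left d n
    linarith [hkey (k0+1)]
  · -- r k0 > 0 : take least j with r j > 0, get bound n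
    have hex : ∃ k, 0 < r k := ⟨k0, hpos⟩
    set j := Nat.find hex with hj_def
    have hj : 0 < r j := Nat.find_spec hex
    have hjN : j < N := by
      by_contra h
      have := hrN j (by omega)
      omega
    have hmin : ((min d n : ℕ) : ℤ) ≤ (n:ℤ) := by exact_mod_cast Nat.min_le_right d n
    refine ⟨j, hjN, ?_⟩
    cases hjc : j with
    | zero =>
      have h0 : (n:ℤ) ≤ -u 0 := by
        have hj' : 0 < r 0 := by rw [← hjc]; exact hj
        have : 1 ≤ r 0 := by omega
        nlinarith [hr0]
      have := hkey 0
      linarith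
    | succ m =>
      have hm : ¬ 0 < r m := Nat.find_min hex (by omega)
      have hj' : 0 < r (m+1) := by rw [← hjc]; exact hj
      have h0 : (n:ℤ) ≤ -u (m+1) := by
        rw [hrrec m]
        have h1 : r m ≤ 0 := by omega
        have h2 : 1 ≤ r (m+1) := by omega
        nlinarith
      have := hkey (m+1)
      linarith

lemma atom_is_pow' (q : ℚ) (hq : 0 < q) (a : ℚ)
    (ha : IsAddAtomIn (AddSubmonoid.closure (Set.range fun k : ℕ => q ^ k)) a) :
    ∃ k : ℕ, a = q ^ k := by
  obtain ⟨haM, ha0, hsplit⟩ := ha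
  obtain ⟨l, hl, hls⟩ := AddSubmonoid.exists_multiset_of_mem_closure haM
  rcases l.empty_or_exists_mem with h0 | ⟨b, hb⟩
  · exact absurd (by rw [← hls, h0, Multiset.sum_zero]) ha0
  obtain ⟨t, rfl⟩ := Multiset.exists_cons_of_mem hb
  obtain ⟨k, hk⟩ := Set.mem_range.mp (hl b (Multiset.mem_cons_self b t))
  rcases t.empty_or_exists_mem with h0 | ⟨y, hy⟩
  · exact ⟨k, by rw [← hls, h0, Multiset.sum_cons, Multiset.sum_zero, add_zero, ← hk]⟩
  exfalso
  have hbpos : 0 < b := hk ▸ pow_pos hq k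
  have htnonneg : ∀ x ∈ t, (0:ℚ) ≤ x := by
    intro x hx
    obtain ⟨m, hm⟩ := Set.mem_range.mp (hl x (Multiset.mem_cons_of_mem hx))
    exact le_of_lt (hm ▸ pow_pos hq m)
  have hypos : 0 < y := by
    obtain ⟨m, hm⟩ := Set.mem_range.mp (hl y (Multiset.mem_cons_of_mem hy))
    exact hm ▸ pow_pos hq m
  have htsum : 0 < t.sum := lt_of_lt_of_le hypos (Multiset.single_le_sum htnonneg y hy)
  refine hsplit b t.sum ?_ ?_ hbpos.ne' htsum.ne' ?_
  · exact AddSubmonoid.subset_closure (hl b (Multiset.mem_cons_self b t))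
  · exact AddSubmonoid.multiset_sum_mem _ t
      (fun x hx => AddSubmonoid.subset_closure (hl x (Multiset.mem_cons_of_mem hx)))
  · rw [← hls, Multiset.sum_cons]

lemma exists_exponent_multiset' (q : ℚ) (v : Multiset ℚ)
    (hv : ∀ a ∈ v, ∃ k : ℕ, a = q ^ k) :
    ∃ e : Multiset ℕ, v = e.map (fun k => q ^ k) := by
  induction v using Multiset.induction with
  | empty => exact ⟨0, rfl⟩
  | cons a s ih =>
    obtain ⟨e, he⟩ := ih (fun x hx => hv x (Multiset.mem_cons_of_mem hx))
    obtain ⟨k, hk⟩ := hv a (Multiset.mem_cons_self a s)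
    exact ⟨k ::ₘ e, by rw [Multiset.map_cons, ← hk, ← he]⟩

lemma multiset_pow_sum' (q : ℚ) (N : ℕ) (e : Multiset ℕ) (he : ∀ k ∈ e, k < N) :
    (e.map fun k => q ^ k).sum = ∑ k ∈ Finset.range N, (e.count k : ℚ) * q ^ k := by
  induction e using Multiset.induction with
  | empty => simp
  | cons a s ih =>
    have ha : a ∈ Finset.range N := Finset.mem_range.mpr (he a (Multiset.mem_cons_self a s))
    rw [Multiset.map_cons, Multiset.sum_cons, ih (fun k hk => he k (Multiset.mem_cons_of_mem hk))]
    simp only [Multiset.count_cons]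
    push_cast
    rw [Finset.sum_congr rfl (fun k _ => show ((s.count k : ℚ) + if k = a then 1 else 0) * q ^ k
        = (s.count k : ℚ) * q ^ k + (if k = a then q ^ k else 0) by split <;> ring)]
    rw [Finset.sum_add_distrib, Finset.sum_ite_eq' (Finset.range N) a (fun k => q ^ k), if_pos ha]
    ring
  
lemma multiset_card_sum' (N : ℕ) (e : Multiset ℕ) (he : ∀ k ∈ e, k < N) :
    e.card = ∑ k ∈ Finset.range N, e.count k := by
  induction e using Multiset.induction with
  | empty => simp
  | cons a s ih =>
    have ha : a ∈ Finset.range N := Finset.mem_range.mpr (he a (Multiset.mem_cons_self a s))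
    rw [Multiset.card_cons, ih (fun k hk => he k (Multiset.mem_cons_of_mem hk))]
    simp only [Multiset.count_cons]
    rw [Finset.sum_add_distrib]
    congr 1
    rw [Finset.sum_ite_eq' (Finset.range N) a (fun _ => 1), if_pos ha]

/-- Let `q = n/d` in lowest terms be a non-integer positive rational with `ℕ₀[q]` atomic.
If an element of `ℕ₀[q]` has more than one factorization into atoms, then every
factorization of that element has length at least `min d n`. -/
theorem stmt_17 (q : ℚ) (hq : 0 < q) (hqint : ¬ ∃ m : ℤ, q = (m : ℚ))
    (hq2 : ¬ ∃ m : ℕ, 2 ≤ m ∧ q⁻¹ = (m : ℚ))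
    (M : AddSubmonoid ℚ)
    (hM : M = AddSubmonoid.closure (Set.range fun k : ℕ => q ^ k))
    (x : ℚ) (z z' : Multiset ℚ)
    (hz : ∀ a ∈ z, IsAddAtomIn M a) (hz' : ∀ a ∈ z', IsAddAtomIn M a)
    (hzs : z.sum = x) (hz's : z'.sum = x) (hne : z ≠ z')
    (w : Multiset ℚ) (hw : ∀ a ∈ w, IsAddAtomIn M a) (hws : w.sum = x) :
    min q.den q.num.toNat ≤ w.card := by
  subst hM
  have hq1 : q ≠ 1 := fun h => hqint ⟨1, by rw [h]; norm_num⟩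
  have hnum : 0 < q.num := Rat.num_pos.mpr hq
  have hn : 0 < q.num.toNat := by omega
  have hd : 0 < q.den := q.den_pos
  have hcop : Nat.Coprime q.num.toNat q.den := by
    have h := q.reduced
    have h2 : q.num.toNat = q.num.natAbs := by omega
    rwa [h2]
  have hq2' : ((q.num.toNat : ℚ)) = (q.num : ℚ) := by
    exact_mod_cast congrArg (Int.cast : ℤ → ℚ) (Int.toNat_of_nonneg hnum.le)
  have hqnd : (q.den : ℚ) * q = (q.num.toNat : ℚ) := by
    have h := Rat.num_div_den q
    have hd0 : (q.den : ℚ) ≠ 0 := by positivity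
    have h4 : (q.num : ℚ) = q * q.den := by
      have h5 := congrArg (fun t : ℚ => t * (q.den : ℚ)) h
      simpa [div_mul_cancel₀, hd0] using h5.symm
    rw [hq2', h4]
    ring
  have hinj : Function.Injective (fun k : ℕ => q ^ k) := by
    rcases lt_or_gt_of_ne hq1 with h | h
    · exact (show StrictAnti fun k : ℕ => q ^ k from
        fun a b hab => pow_lt_pow_right_of_lt_one₀ hq h hab).injective
    · exact (show StrictMono fun k : ℕ => q ^ k from
        fun a b hab => pow_lt_pow_right₀ h hab).injective
  obtain ⟨ez, hez⟩ := exists_exponent_multiset' q z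
    (fun a ha => atom_is_pow' q hq a (hz a ha))
  obtain ⟨ez', hez'⟩ := exists_exponent_multiset' q z'
    (fun a ha => atom_is_pow' q hq a (hz' a ha))
  obtain ⟨ew, hew⟩ := exists_exponent_multiset' q w
    (fun a ha => atom_is_pow' q hq a (hw a ha))
  set N := (ez + ez' + ew).sup + 1 with hN_def
  have hbz : ∀ k ∈ ez, k < N := fun k hk =>
    Nat.lt_succ_of_le (Multiset.le_sup (by simp [hk]))
  have hbz' : ∀ k ∈ ez', k < N := fun k hk =>
    Nat.lt_succ_of_le (Multiset.le_sup (by simp [hk]))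
  have hbw : ∀ k ∈ ew, k < N := fun k hk =>
    Nat.lt_succ_of_le (Multiset.le_sup (by simp [hk]))
  have hcz0 : ∀ k, N ≤ k → ez.count k = 0 := fun k hk =>
    Multiset.count_eq_zero_of_notMem (fun hmem => absurd (hbz k hmem) (by omega))
  have hcz'0 : ∀ k, N ≤ k → ez'.count k = 0 := fun k hk =>
    Multiset.count_eq_zero_of_notMem (fun hmem => absurd (hbz' k hmem) (by omega))
  have hcw0 : ∀ k, N ≤ k → ew.count k = 0 := fun k hk =>
    Multiset.count_eq_zero_of_notMem (fun hmem => absurd (hbw k hmem) (by omega))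
  have hsum_z : ∑ k ∈ Finset.range N, (ez.count k : ℚ) * q ^ k = x := by
    rw [← multiset_pow_sum' q N ez hbz, ← hez]; exact hzs
  have hsum_z' : ∑ k ∈ Finset.range N, (ez'.count k : ℚ) * q ^ k = x := by
    rw [← multiset_pow_sum' q N ez' hbz', ← hez']; exact hz's
  have hsum_w : ∑ k ∈ Finset.range N, (ew.count k : ℚ) * q ^ k = x := by
    rw [← multiset_pow_sum' q N ew hbw, ← hew]; exact hws
  have hezne : ez ≠ ez' := fun h => hne (by rw [hez, hez', h])
  have hcne : (fun k => ez.count k) ≠ (fun k => ez'.count k) := fun h =>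
    hezne (Multiset.ext.mpr (fun k => congrFun h k))
  have hwcard : w.card = ∑ k ∈ Finset.range N, ew.count k := by
    rw [hew, Multiset.card_map]
    exact multiset_card_sum' N ew hbw
  by_cases hcase : (fun k => ew.count k) = (fun k => ez.count k)
  · have h2 : (fun k => ez'.count k) ≠ (fun k => ew.count k) := by
      intro h
      exact hcne (by rw [← hcase, ← h])
    have hb := core_bound q q.num.toNat q.den hn hd hcop hqnd N
      (fun k => ez'.count k) (fun k => ew.count k) hcz'0 hcw0
      (hsum_z'.trans hsum_w.symm) h2
    rw [hwcard]; exact hb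
  · have h2 : (fun k => ez.count k) ≠ (fun k => ew.count k) := fun h => hcase h.symm
    have hb := core_bound q q.num.toNat q.den hn hd hcop hqnd N
      (fun k => ez.count k) (fun k => ew.count k) hcz0 hcw0
      (hsum_z.trans hsum_w.symm) h2
    rw [hwcard]; exact hb
end

section
/- Let α > 1 be the real root exceeding 1 of p(X) = X⁴ − X³ − X² − X + 1, and suppose ℕ₀[α] is atomic with atoms {α^n : n ∈ ℕ₀}. Then the catenary degree of ℕ₀[α] is infinite. -/
/-- The distance between two factorizations (multisets of atoms):
`d(z, w) = max(|z| - |gcd(z,w)|, |w| - |gcd(z,w)|)`, where `gcd` is the common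
sub-multiset `z ∩ w`. -/
noncomputable def factDist {R : Type*} (z w : Multiset R) : ℕ :=
  letI := Classical.decEq R
  max (z.card - (z ∩ w).card) (w.card - (z ∩ w).card)

/-!
From `α⁴ - α³ - α² - α + 1 = 0` one gets `α^(3k+1) + 1 = α^(3k) + α + ∑_{j<k} α^(3j+2)`, a
factorization of length `k + 2` of an element that also factors as `α^(3k+1) + 1`. A chain with
steps of size at most `N` leaving the latter factorization must first reach another factorization
of length at most `N + 2`. Such a factorization does not contain `α^(3k+1)`, and dividing it by
`α^(3k+1)` writes `1 + α^-(3k+1)` as a sum of at most `N + 2` powers `α^-(m+1)`. Since `α^d` is an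
atom, `1` itself is no such sum; and the sums of boundedly many terms of a null sequence form a
closed set, so `1 + α^-(3k+1)` is no such sum either once `k` is large.
-/

open Filter Topology Multiset

theorem Multiset.exists_map_eq_of_forall_mem_range {α β : Type*} {f : β → α} {w : Multiset α}
    (h : ∀ a ∈ w, ∃ b, f b = a) : ∃ S : Multiset β, S.map f = w := by
  induction w using Multiset.induction_on with
  | empty => exact ⟨0, rfl⟩
  | cons a w ih =>
    obtain ⟨S, rfl⟩ := ih fun b hb => h b (mem_cons_of_mem hb)
    obtain ⟨b, rfl⟩ := h _ (mem_cons_self _ _)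
    exact ⟨b ::ₘ S, map_cons f b S⟩

theorem Fin.exists_castSucc_eq_succ_ne {α : Type*} {k : ℕ} {f : Fin (k + 1) → α} {a : α}
    (h0 : f 0 = a) (hlast : f (Fin.last k) ≠ a) : ∃ i : Fin k, f i.castSucc = a ∧ f i.succ ≠ a := by
  by_contra! h
  exact hlast (Fin.induction (motive := fun i => f i = a) h0 h (Fin.last k))

theorem card_le_factDist_add_card {R : Type*} (z w : Multiset R) :
    card w ≤ factDist z w + card z := by
  let := Classical.decEq R
  have := card_le_card (inter_le_left (s := z) (t := w))
  unfold factDist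
  omega

theorem not_exists_chain_of_forall_card_le_eq {R : Type*} {P : Multiset R → Prop}
    {z z' : Multiset R} (N : ℕ) (hzz' : z' ≠ z)
    (hisol : ∀ w, P w → card w ≤ N + card z → w = z) :
    ¬ ∃ (k : ℕ) (f : Fin (k + 1) → Multiset R), f 0 = z ∧ f (Fin.last k) = z' ∧
      (∀ i, P (f i)) ∧ ∀ i : Fin k, factDist (f i.castSucc) (f i.succ) ≤ N := by
  rintro ⟨k, f, h0, hlast, hP, hstep⟩
  obtain ⟨i, hi, hne⟩ := Fin.exists_castSucc_eq_succ_ne h0 (hlast ▸ hzz')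
  have hlen := card_le_factDist_add_card (f i.castSucc) (f i.succ)
  have hi_step := hstep i
  rw [hi] at hlen hi_step
  exact hne (hisol _ (hP _) (by omega))

theorem IsAddAtomIn.eq_singleton_of_sum_eq {R : Type*} [AddCommMonoid R] [PartialOrder R]
    [IsOrderedCancelAddMonoid R] {S : AddSubmonoid R} {a : R} (ha : IsAddAtomIn S a)
    {W : Multiset R} (hW : ∀ w ∈ W, w ∈ S ∧ 0 < w) (hsum : W.sum = a) : W = {a} := by
  cases W using Multiset.induction_on with
  | empty => exact absurd hsum.symm ha.2.1
  | cons u W =>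
    cases W using Multiset.induction_on with
    | empty => simpa using hsum
    | cons v W =>
      have hu := hW u (mem_cons_self _ _)
      have hrest : ∀ w ∈ v ::ₘ W, w ∈ S ∧ 0 < w := fun w hw => hW w (mem_cons_of_mem hw)
      have hpos : 0 < (v ::ₘ W).sum := by
        rw [sum_cons]
        exact add_pos_of_pos_of_nonneg (hrest v (mem_cons_self _ _)).2
          (sum_nonneg fun w hw => (hrest w (mem_cons_of_mem hw)).2.le)
      exact absurd (by rw [← hsum, sum_cons]) <| ha.2.2 u _ hu.1
        (S.multiset_sum_mem _ fun w hw => (hrest w hw).1) hu.2.ne' hpos.ne'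

theorem eventually_forall_sum_map_ne {G : Type*} [AddCommGroup G] [TopologicalSpace G]
    [IsTopologicalAddGroup G] [T1Space G] {f : ℕ → G} (hf : Tendsto f atTop (𝓝 0)) {t : G}
    (n : ℕ) (ht : ∀ T : Multiset ℕ, card T ≤ n → (T.map f).sum ≠ t) :
    ∀ᶠ x in 𝓝 t, ∀ T : Multiset ℕ, card T ≤ n → (T.map f).sum ≠ x := by
  induction n with
  | zero =>
    filter_upwards [eventually_ne_nhds (by simpa using (ht 0 le_rfl).symm)] with x hx T hT
    simpa [card_eq_zero.1 (Nat.le_zero.1 hT)] using hx.symm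
  | succ n ih =>
    have ih := ih fun T hT => ht T (hT.trans n.le_succ)
    have hshift : Tendsto (fun p : G × ℕ => p.1 - f p.2) (𝓝 t ×ˢ atTop) (𝓝 t) := by
      simpa using tendsto_fst.sub (hf.comp tendsto_snd)
    obtain ⟨P, hP, Q, hQ, hPQ⟩ := eventually_prod_iff.1 (hshift.eventually ih)
    obtain ⟨L, hL⟩ := eventually_atTop.1 hQ
    have hfin : ∀ᶠ x in 𝓝 t, ∀ T ∈ (Finset.range L).sym (n + 1), ((T : Multiset ℕ).map f).sum ≠ x :=
      (eventually_all_finset _).2 fun T _ =>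
        (eventually_ne_nhds (ht T T.2.le).symm).mono fun _ hx => hx.symm
    filter_upwards [ih, hP, hfin] with x hx hxP hxfin T hT
    rcases hT.lt_or_eq with hT | hT
    · exact hx T (Nat.lt_succ_iff.1 hT)
    by_cases hbig : ∃ m ∈ T, L ≤ m
    · obtain ⟨m, hm, hLm⟩ := hbig
      obtain ⟨T', rfl⟩ := exists_cons_of_mem hm
      have hT' := hPQ hxP (hL m hLm) T' (by simpa using hT.le)
      rw [map_cons, sum_cons]
      exact fun h => hT' (eq_sub_of_add_eq' h)
    · push Not at hbig
      exact hxfin ⟨T, hT⟩ (Finset.mem_sym_iff.2 fun m hm => Finset.mem_range.2 (hbig m hm))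

theorem pow_three_mul_add_one_add_one_eq {R : Type*} [CommRing R] {α : R}
    (hroot : α ^ 4 - α ^ 3 - α ^ 2 - α + 1 = 0) (k : ℕ) :
    α ^ (3 * k + 1) + 1 = α ^ (3 * k) + α + ∑ j ∈ Finset.range k, α ^ (3 * j + 2) := by
  induction k with
  | zero => simp [add_comm]
  | succ k ih =>
    rw [Finset.sum_range_succ]
    linear_combination ih + α ^ (3 * k) * hroot

section Root

variable {α : ℝ} (hα : 1 < α)

include hα in
theorem pow_add_one_lt_pow_succ (hroot : α ^ 4 - α ^ 3 - α ^ 2 - α + 1 = 0) {n : ℕ}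
    (hn : n ≠ 0) : α ^ n + 1 < α ^ (n + 1) := by
  have hgolden : 0 < α ^ 2 - α - 1 := by
    have h : α ^ 2 * (α ^ 2 - α - 1) = α - 1 := by linear_combination hroot
    exact (mul_pos_iff_of_pos_left (by positivity)).1 (h ▸ sub_pos.2 hα)
  have hn : α ≤ α ^ n := le_self_pow₀ hα.le hn
  rw [pow_succ]
  nlinarith

include hα in
theorem le_of_mem_of_sum_map_pow_eq (hroot : α ^ 4 - α ^ 3 - α ^ 2 - α + 1 = 0) {S : Multiset ℕ}
    {e : ℕ} (he : e ≠ 0) (hsum : (S.map (α ^ ·)).sum = α ^ e + 1) {n : ℕ} (hn : n ∈ S) :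
    n ≤ e := by
  by_contra! hlt
  have hterm : α ^ n ≤ (S.map (α ^ ·)).sum :=
    single_le_sum (fun _ h => by obtain ⟨_, -, rfl⟩ := Multiset.mem_map.1 h; positivity) _
      (Multiset.mem_map_of_mem _ hn)
  have hbig : α ^ (e + 1) ≤ α ^ n := pow_le_pow_right₀ hα.le hlt
  linarith [pow_add_one_lt_pow_succ hα hroot he]

variable {M : AddSubmonoid ℝ} (hatoms : ∀ a, IsAddAtomIn M a ↔ ∃ k : ℕ, a = α ^ k)

include hα hatoms in
theorem eq_singleton_of_sum_map_pow_eq {S : Multiset ℕ} {d : ℕ}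
    (h : (S.map (α ^ ·)).sum = α ^ d) : S = {d} := by
  have hW : ∀ w ∈ S.map (α ^ ·), w ∈ M ∧ 0 < w := by
    simp only [Multiset.mem_map]
    rintro _ ⟨n, -, rfl⟩
    exact ⟨((hatoms _).2 ⟨n, rfl⟩).1, by positivity⟩
  obtain ⟨n, rfl, hn⟩ := map_eq_singleton.1 (((hatoms _).2 ⟨d, rfl⟩).eq_singleton_of_sum_eq hW h)
  rw [pow_right_injective₀ (by positivity) hα.ne' hn]

include hα hatoms in
theorem sum_map_inv_pow_succ_ne_one (T : Multiset ℕ) :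
    (T.map fun m => (α ^ (m + 1))⁻¹).sum ≠ 1 := by
  intro h
  set d := T.sup + 1
  have hd : ((T.map fun m => d - (m + 1)).map (α ^ ·)).sum = α ^ d := by
    rw [Multiset.map_map, ← mul_one (α ^ d), ← h, ← sum_map_mul_left]
    exact congr_arg sum <| map_congr rfl fun m hm =>
      pow_sub₀ α (by positivity) (Nat.succ_le_succ (le_sup hm))
  obtain ⟨m, -, hm⟩ := map_eq_singleton.1 (eq_singleton_of_sum_map_pow_eq hα hatoms hd)
  omega

include hα hatoms in
theorem eventually_eq_of_card_le_of_sum_map_pow_eq (hroot : α ^ 4 - α ^ 3 - α ^ 2 - α + 1 = 0)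
    (C : ℕ) : ∀ᶠ k in atTop, ∀ S : Multiset ℕ, card S ≤ C →
      (S.map (α ^ ·)).sum = α ^ (3 * k + 1) + 1 → S = {3 * k + 1, 0} := by
  set f : ℕ → ℝ := fun m => (α ^ (m + 1))⁻¹
  have hf : Tendsto f atTop (𝓝 0) := tendsto_inv_atTop_zero.comp <|
    (tendsto_pow_atTop_atTop_of_one_lt hα).comp (tendsto_add_atTop_nat 1)
  have hsmall : Tendsto (fun k => 1 + f (3 * k)) atTop (𝓝 1) := by
    simpa using tendsto_const_nhds.add
      (hf.comp (tendsto_atTop_mono (fun k => by omega : ∀ k, k ≤ 3 * k) tendsto_id))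
  filter_upwards [hsmall.eventually (eventually_forall_sum_map_ne hf C
    fun T _ => sum_map_inv_pow_succ_ne_one hα hatoms T)] with k hk S hcard hsum
  have hle n (hn : n ∈ S) := le_of_mem_of_sum_map_pow_eq hα hroot (by omega) hsum hn
  by_cases htop : 3 * k + 1 ∈ S
  · obtain ⟨S', rfl⟩ := exists_cons_of_mem htop
    rw [eq_singleton_of_sum_map_pow_eq hα hatoms (S := S') (d := 0) (by simpa using hsum)]
    rfl
  refine absurd ?_ (hk (S.map (3 * k - ·)) (by simpa using hcard))
  calc ((S.map (3 * k - ·)).map f).sum = (S.map fun n => (α ^ (3 * k + 1))⁻¹ * α ^ n).sum := by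
        rw [Multiset.map_map]
        refine congr_arg sum (map_congr rfl fun n hn => ?_)
        have hn : n ≤ 3 * k := by
          have := hle n hn
          have : n ≠ 3 * k + 1 := fun h => htop (h ▸ hn)
          omega
        simp only [f, Function.comp_apply, show 3 * k - n + 1 = 3 * k + 1 - n by omega,
          pow_sub₀ α (by positivity : α ≠ 0) (by omega : n ≤ 3 * k + 1), mul_inv, inv_inv]
    _ = 1 + f (3 * k) := by
        rw [sum_map_mul_left, hsum, mul_add, inv_mul_cancel₀ (by positivity), mul_one]

end Root

theorem stmt_19_general (α : ℝ) (hα : 1 < α)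
    (hroot : α ^ 4 - α ^ 3 - α ^ 2 - α + 1 = 0)
    (M : AddSubmonoid ℝ)
    (hatoms : ∀ a, IsAddAtomIn M a ↔ ∃ k : ℕ, a = α ^ k) :
    ¬ ∃ N : ℕ, ∀ x ∈ M, ∀ z z' : Multiset ℝ,
      (∀ a ∈ z, IsAddAtomIn M a) → z.sum = x →
      (∀ a ∈ z', IsAddAtomIn M a) → z'.sum = x →
      ∃ (k : ℕ) (f : Fin (k + 1) → Multiset ℝ),
        f 0 = z ∧ f (Fin.last k) = z' ∧
        (∀ i, (∀ a ∈ f i, IsAddAtomIn M a) ∧ (f i).sum = x) ∧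
        (∀ i : Fin k, factDist (f i.castSucc) (f i.succ) ≤ N) := by
  rintro ⟨N, hchain⟩
  obtain ⟨k, hshort, hk⟩ := ((eventually_eq_of_card_le_of_sum_map_pow_eq hα hatoms hroot
    (N + 2)).and (eventually_ge_atTop 1)).exists
  have hfact (S : Multiset ℕ) : ∀ a ∈ S.map (α ^ ·), IsAddAtomIn M a := by
    simp only [Multiset.mem_map]
    rintro _ ⟨n, -, rfl⟩
    exact (hatoms _).2 ⟨n, rfl⟩
  set z := ({3 * k + 1, 0} : Multiset ℕ).map (α ^ ·)
  set z' := (3 * k ::ₘ 1 ::ₘ (range k).map (3 * · + 2)).map (α ^ ·)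
  have hz : z.sum = α ^ (3 * k + 1) + 1 := by simp [z]
  have hz' : z'.sum = α ^ (3 * k + 1) + 1 := by
    simp [z', pow_three_mul_add_one_add_one_eq hroot, Finset.sum, add_assoc]
  have hzz' : z' ≠ z := fun h => by
    have := congr_arg card h
    simp only [z, z', card_map, card_cons, insert_eq_cons, card_singleton, card_range] at this
    omega
  refine not_exists_chain_of_forall_card_le_eq
    (P := fun w => (∀ a ∈ w, IsAddAtomIn M a) ∧ w.sum = α ^ (3 * k + 1) + 1) N hzz'
    (fun w hw hcard => ?_) <|
    hchain _ (hz ▸ M.multiset_sum_mem z fun a ha => (hfact _ a ha).1) z z' (hfact _) hz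
      (hfact _) hz'
  obtain ⟨S, rfl⟩ := exists_map_eq_of_forall_mem_range (f := (α ^ ·)) fun a ha =>
    ((hatoms a).1 (hw.1 a ha)).imp fun _ => Eq.symm
  rw [hshort S (by simpa [z] using hcard) hw.2]

/-- Let `α > 1` be the real root of `X⁴ - X³ - X² - X + 1` exceeding `1`, with `ℕ₀[α]`
atomic with atoms `{α^n}`. Then the catenary degree of `ℕ₀[α]` is infinite: there is no
`N ∈ ℕ` such that any two factorizations of any element of `ℕ₀[α]` can be connected by an
`N`-chain of factorizations. -/
theorem stmt_19 (α : ℝ) (hα : 1 < α)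
    (hroot : α ^ 4 - α ^ 3 - α ^ 2 - α + 1 = 0)
    (M : AddSubmonoid ℝ)
    (hM : M = AddSubmonoid.closure (Set.range fun k : ℕ => α ^ k))
    (hatoms : ∀ a, IsAddAtomIn M a ↔ ∃ k : ℕ, a = α ^ k)
    (hatomic : ∀ x ∈ M, x ≠ 0 → ∃ l : Multiset ℝ, (∀ a ∈ l, IsAddAtomIn M a) ∧ l.sum = x) :
    ¬ ∃ N : ℕ, ∀ x ∈ M, ∀ z z' : Multiset ℝ,
      (∀ a ∈ z, IsAddAtomIn M a) → z.sum = x →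
      (∀ a ∈ z', IsAddAtomIn M a) → z'.sum = x →
      ∃ (k : ℕ) (f : Fin (k + 1) → Multiset ℝ),
        f 0 = z ∧ f (Fin.last k) = z' ∧
        (∀ i, (∀ a ∈ f i, IsAddAtomIn M a) ∧ (f i).sum = x) ∧
        (∀ i : Fin k, factDist (f i.castSucc) (f i.succ) ≤ N) :=
  stmt_19_general α hα hroot M hatoms
end
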